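/- arXiv:2112.14615 — 11 statements merged into one kernel-verified Lean document; each statement's English description precedes it below -/
import Mathlib

section
/- Let K be a compact Hausdorff topological space equipped with a linear order whose order (interval) topology coincides with the topology of K, and let a group G act on K such that for every g ∈ G the map x ↦ g•x is an order-preserving bijection of K. If every orbit G•x is dense in K, then K has at most one point. -/
/-!
By compactness `K` has a greatest element, and every order-preserving bijection fixes it, so its
orbit is a single point. A dense singleton in a T1 space is the whole space.
-/

open Set MulAction

theorem Dense.subsingleton_of_subsingleton {X : Type*} [TopologicalSpace X] [T1Space X]
    {s : Set X} (hd : Dense s) (hs : s.Subsingleton) : Subsingleton X := by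
  rw [← subsingleton_univ_iff, ← hd.closure_eq]
  exact hs.closure

theorem MulAction.smul_eq_self_of_isTop {G K : Type*} [Group G] [PartialOrder K] [MulAction G K]
    (hmono : ∀ g : G, Monotone (fun x : K => g • x)) {m : K} (hm : IsTop m) (g : G) :
    g • m = m :=
  le_antisymm (hm _) (by simpa using hmono g (hm (g⁻¹ • m)))

theorem minimal_linearly_ordered_system_is_trivial_general
    {K : Type*} [TopologicalSpace K] [LinearOrder K] [OrderTopology K]
    [CompactSpace K]
    {G : Type*} [Group G] [MulAction G K]
    (hmono : ∀ g : G, Monotone (fun x : K => g • x))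
    (hmin : ∀ x : K, Dense (MulAction.orbit G x)) :
    Subsingleton K := by
  rcases isEmpty_or_nonempty K with hK | hK
  · infer_instance
  obtain ⟨m, -, hm⟩ := isCompact_univ.exists_isGreatest (univ_nonempty (α := K))
  have hfix : m ∈ fixedPoints G K := smul_eq_self_of_isTop hmono fun x => hm (mem_univ x)
  exact (hmin m).subsingleton_of_subsingleton (subsingleton_orbit_iff_mem_fixedPoints.2 hfix)

/-- Let `K` be a compact Hausdorff space equipped with a linear order whose
order (interval) topology coincides with the topology of `K`, and let a group `G` act on `K`
such that every `g ∈ G` acts as an order-preserving bijection. If every orbit `G • x` is dense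
in `K`, then `K` has at most one point. -/
theorem minimal_linearly_ordered_system_is_trivial
    {K : Type*} [TopologicalSpace K] [LinearOrder K] [OrderTopology K]
    [CompactSpace K] [T2Space K]
    {G : Type*} [Group G] [MulAction G K]
    (hmono : ∀ g : G, Monotone (fun x : K => g • x))
    (hmin : ∀ x : K, Dense (MulAction.orbit G x)) :
    Subsingleton K :=
  minimal_linearly_ordered_system_is_trivial_general hmono hmin
end

section
/- Let X be a circularly ordered set. Then the circular topology τ∘ on X, namely the topology generated by the complements X \ [a,b]∘ of closed intervals (for all a, b ∈ X), is Hausdorff. -/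
/-- The closed interval `[a,b]∘ = {x | sbtw a x b} ∪ {a, b}` of a circularly ordered set. -/
def cIcc {X : Type*} [CircularOrder X] (a b : X) : Set X :=
  {x | sbtw a x b} ∪ {a, b}

/-- The circular (interval) topology of a circular order: the topology generated by the
complements of the closed intervals `[a,b]∘`. -/
def circularTopology (X : Type*) [CircularOrder X] : TopologicalSpace X :=
  TopologicalSpace.generateFrom {s : Set X | ∃ a b : X, s = (cIcc a b)ᶜ}

/-! For `a ≠ b` the basic open set `X \ [a,b]∘` is the open arc `(b,a)∘`, and `X \ [a,a]∘` is
`X \ {a}`. Two distinct points `x`, `y` cut the circle into the arcs `(x,y)∘` and `(y,x)∘`.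
Points `p ∈ (x,y)∘` and `q ∈ (y,x)∘` give the disjoint arcs `(q,p)∘ ∋ x` and `(p,q)∘ ∋ y`.
If only `p` exists, `(y,p)∘ ∋ x` and `(p,x)∘ ∋ y` meet only inside the empty arc `(y,x)∘`;
if neither exists, `X = {x, y}` and `X \ {y}`, `X \ {x}` separate the points. -/

open Topology

section CircularOrder

variable {X : Type*} [CircularOrder X]

theorem Set.cIoo_inter_cIoo_subset (a b c : X) :
    Set.cIoo a b ∩ Set.cIoo b c ⊆ Set.cIoo a c := fun _ ⟨hab, hbc⟩ =>
  (hbc.cyclic_left.cyclic_left.trans_left hab.cyclic_left.cyclic_left).cyclic_left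

theorem Set.cIoo_self (a : X) : Set.cIoo a a = ∅ :=
  Set.eq_empty_of_forall_notMem fun _ => sbtw_irrefl_left_right

theorem Set.disjoint_cIoo_cIoo (a b : X) : Disjoint (Set.cIoo a b) (Set.cIoo b a) := by
  rw [Set.disjoint_iff, ← Set.cIoo_self a]
  exact Set.cIoo_inter_cIoo_subset a b a

theorem cIcc_self (a : X) : cIcc a a = {a} := by
  simp [cIcc, sbtw_irrefl_left_right]

theorem cIcc_eq_set_cIcc {a b : X} (hab : a ≠ b) : cIcc a b = Set.cIcc a b := by
  ext z
  simp only [cIcc, Set.mem_union, Set.mem_ofPred_eq, Set.mem_insert_iff, Set.mem_singleton_iff,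
    Set.mem_cIcc]
  refine ⟨?_, fun h => ?_⟩
  · rintro (h | rfl | rfl)
    exacts [h.btw, btw_rfl_left, btw_rfl_right]
  · by_contra! hne
    rcases h.antisymm (btw_iff_not_sbtw.2 hne.1) with rfl | rfl | rfl
    exacts [hne.2.1 rfl, hne.2.2 rfl, hab rfl]

theorem compl_cIcc_of_ne {a b : X} (hab : a ≠ b) : (cIcc a b)ᶜ = Set.cIoo b a := by
  rw [cIcc_eq_set_cIcc hab, Set.compl_cIcc]

theorem eq_or_eq_of_cIoo_eq_empty {x y : X} (hxy : x ≠ y) (h₁ : Set.cIoo x y = ∅)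
    (h₂ : Set.cIoo y x = ∅) (z : X) : z = x ∨ z = y := by
  by_contra! hz
  have hyzx : btw y z x := btw_iff_not_sbtw.2 (Set.eq_empty_iff_forall_notMem.1 h₁ z)
  have hxzy : btw x z y := btw_iff_not_sbtw.2 (Set.eq_empty_iff_forall_notMem.1 h₂ z)
  rcases hyzx.antisymm hxzy with rfl | rfl | rfl
  exacts [hz.2 rfl, hz.1 rfl, hxy rfl]

end CircularOrder

namespace circularTopology

variable {X : Type*} [CircularOrder X]

theorem isOpen_compl_cIcc (a b : X) : IsOpen[circularTopology X] (cIcc a b)ᶜ :=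
  TopologicalSpace.GenerateOpen.basic _ ⟨a, b, rfl⟩

theorem isOpen_cIoo {a b : X} (hab : a ≠ b) : IsOpen[circularTopology X] (Set.cIoo a b) := by
  simpa only [compl_cIcc_of_ne hab.symm] using isOpen_compl_cIcc b a

theorem isOpen_compl_singleton (a : X) : IsOpen[circularTopology X] ({a}ᶜ : Set X) := by
  simpa only [cIcc_self] using isOpen_compl_cIcc a a

theorem exists_separation_of_cIoo_eq_empty {x y : X} (hxy : x ≠ y) (h : Set.cIoo y x = ∅) :
    ∃ U V : Set X, IsOpen[circularTopology X] U ∧ IsOpen[circularTopology X] V ∧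
      x ∈ U ∧ y ∈ V ∧ Disjoint U V := by
  rcases (Set.cIoo x y).eq_empty_or_nonempty with h' | ⟨p, hp⟩
  · refine ⟨{y}ᶜ, {x}ᶜ, isOpen_compl_singleton y, isOpen_compl_singleton x, hxy, hxy.symm,
      Set.disjoint_left.2 fun z hzy hzx => ?_⟩
    rcases eq_or_eq_of_cIoo_eq_empty hxy h' h z with rfl | rfl
    exacts [hzx rfl, hzy rfl]
  · have hxp : x ≠ p := fun h => sbtw_irrefl_left (h ▸ hp : sbtw p p y)
    have hpy : p ≠ y := fun h => sbtw_irrefl_right (h ▸ hp : sbtw x y y)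
    refine ⟨Set.cIoo y p, Set.cIoo p x, isOpen_cIoo hpy.symm, isOpen_cIoo hxp.symm,
      hp.cyclic_right, hp.cyclic_left, ?_⟩
    rw [Set.disjoint_iff, ← h]
    exact Set.cIoo_inter_cIoo_subset y p x

end circularTopology

/-- The circular topology of a circularly ordered set is Hausdorff. -/
theorem circularTopology_t2 (X : Type*) [CircularOrder X] :
    @T2Space X (circularTopology X) := by
  refine @T2Space.mk X (circularTopology X) fun x y hxy => ?_
  rcases (Set.cIoo y x).eq_empty_or_nonempty with hyx | ⟨q, hq⟩
  · exact circularTopology.exists_separation_of_cIoo_eq_empty hxy hyx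
  rcases (Set.cIoo x y).eq_empty_or_nonempty with hxy' | ⟨p, hp⟩
  · obtain ⟨U, V, hU, hV, hyU, hxV, hUV⟩ :=
      circularTopology.exists_separation_of_cIoo_eq_empty hxy.symm hxy'
    exact ⟨V, U, hV, hU, hxV, hyU, hUV.symm⟩
  have hpq : p ≠ q := fun h => sbtw_asymm hp (h ▸ hq)
  exact ⟨Set.cIoo q p, Set.cIoo p q, circularTopology.isOpen_cIoo hpq.symm,
    circularTopology.isOpen_cIoo hpq, (hp.cyclic_left.trans_left hq).cyclic_left,
    (hq.cyclic_left.trans_left hp).cyclic_left, Set.disjoint_cIoo_cIoo q p⟩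
end

section
/- Let X be a circularly ordered set and G a group acting on X such that every g ∈ G preserves strict betweenness: sbtw a b c implies sbtw (g•a) (g•b) (g•c). Suppose that for some a ∈ X the stabilizer subgroup St(a) = {g ∈ G | g•a = a} admits a left-invariant linear order. Then G admits a left-invariant circular order: there is a circular order on G whose strict betweenness relation sbtw_G satisfies sbtw_G x y z ↔ sbtw_G (g*x) (g*y) (g*z) for all g, x, y, z ∈ G. -/
/-!
Order `G` lexicographically: first by the position of `g • a` in the circular order of `X`, then,
inside a fibre `g • St(a)` of the orbit map, by the order of `St(a)` transported to the coset
(`u < v` iff `v = u * h` with `1 < h`). Both ingredients are invariant under left multiplication,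
hence so is the resulting circular order.
-/

/-- The strict betweenness relation of a given circular order structure. -/
def csbtw {G : Type*} (c : CircularOrder G) : G → G → G → Prop :=
  letI := c
  fun x y z => sbtw x y z

open Function MulAction

theorem sbtw_or_sbtw_of_ne {α : Type*} [CircularOrder α] {a b c : α} (hab : a ≠ b) (hbc : b ≠ c)
    (hac : a ≠ c) : sbtw a b c ∨ sbtw c b a := by
  simp only [sbtw_iff_not_btw, ← not_and_or]
  rintro ⟨hcba, habc⟩
  rcases hcba.antisymm habc with h | h | h
  exacts [hbc h.symm, hab h.symm, hac h]

abbrev CircularOrder.ofSBtw {α : Type*} (R : α → α → α → Prop)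
    (cyclic : ∀ {x y z}, R x y z → R y z x)
    (asymm : ∀ {x y z}, R x y z → ¬ R z y x)
    (total : ∀ {x y z}, x ≠ y → y ≠ z → x ≠ z → R x y z ∨ R z y x)
    (trans : ∀ {x y z w}, R x y z → R y w z → R x w z) : CircularOrder α where
  btw x y z := ¬ R z y x
  sbtw := R
  btw_refl _ h := asymm h h
  btw_cyclic_left h h' := h (cyclic h')
  sbtw_iff_btw_not_btw := ⟨fun h => ⟨asymm h, not_not_intro h⟩, fun h => not_not.mp h.2⟩
  sbtw_trans_left := trans
  btw_antisymm h h' := by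
    by_contra! hne
    exact (total hne.1 hne.2.1 hne.2.2.symm).elim h' h
  btw_total _ _ _ := not_and_or.mp fun h => asymm h.2 h.1

section FiberLex

variable {α β : Type*} [CircularOrder β] (f : α → β) (r : α → α → Prop)

def FiberLexStep (x y z : α) : Prop :=
  r x y ∧ (f y = f z → r y z)

/-- The three rotations of `FiberLexStep` cover the cases where exactly two of the points share a
fibre (and are `r`-ordered) and where all three do (and are in cyclic `r`-order). -/
def FiberLexSBtw (x y z : α) : Prop :=
  sbtw (f x) (f y) (f z) ∨ FiberLexStep f r x y z ∨ FiberLexStep f r y z x ∨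
    FiberLexStep f r z x y

variable {f r}

theorem FiberLexSBtw.cyclic {x y z : α} (h : FiberLexSBtw f r x y z) :
    FiberLexSBtw f r y z x := by
  unfold FiberLexSBtw at *
  grind [sbtw_cyclic_left]

theorem FiberLexSBtw.map {φ : α → α} {ψ : β → β} (hf : ∀ x, f (φ x) = ψ (f x))
    (hψ : Injective ψ) (hψsbtw : ∀ {a b c}, sbtw a b c → sbtw (ψ a) (ψ b) (ψ c))
    (hr : ∀ {x y}, r x y → r (φ x) (φ y)) {x y z : α} (h : FiberLexSBtw f r x y z) :
    FiberLexSBtw f r (φ x) (φ y) (φ z) := by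
  unfold FiberLexSBtw FiberLexStep at *
  simp only [hf, hψ.eq_iff]
  grind

theorem fiberLexSBtw_or_swap (htot : ∀ {x y}, f x = f y → x ≠ y → r x y ∨ r y x) {x y z : α}
    (hxy : x ≠ y) (hyz : y ≠ z) (hxz : x ≠ z) :
    FiberLexSBtw f r x y z ∨ FiberLexSBtw f r z y x := by
  unfold FiberLexSBtw FiberLexStep
  grind [sbtw_or_sbtw_of_ne]

variable [IsStrictOrder α r]

theorem FiberLexSBtw.not_swap (hfib : ∀ {x y}, r x y → f x = f y) {x y z : α}
    (h : FiberLexSBtw f r x y z) : ¬ FiberLexSBtw f r z y x := by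
  have := irrefl_of r
  have := @IsTrans.trans α r _
  unfold FiberLexSBtw FiberLexStep at *
  grind [sbtw_asymm, sbtw_irrefl_left, sbtw_irrefl_right, sbtw_irrefl_left_right]

/- A case analysis on which of the four points share a fibre: `hfib` turns each `r`-relation
into an equality of images, which strict betweenness in `β` rules out. -/
theorem FiberLexSBtw.trans_left (hfib : ∀ {x y}, r x y → f x = f y) {x y z w : α}
    (h : FiberLexSBtw f r x y z) (h' : FiberLexSBtw f r y w z) : FiberLexSBtw f r x w z := by
  have := irrefl_of r
  have := @IsTrans.trans α r _
  unfold FiberLexSBtw FiberLexStep at *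
  grind [sbtw_trans_left, sbtw_asymm, sbtw_irrefl_left, sbtw_irrefl_right,
    sbtw_irrefl_left_right]

variable (f r) in
abbrev fiberLexCircularOrder (hfib : ∀ {x y}, r x y → f x = f y)
    (htot : ∀ {x y}, f x = f y → x ≠ y → r x y ∨ r y x) : CircularOrder α :=
  .ofSBtw (FiberLexSBtw f r) FiberLexSBtw.cyclic (fun h => h.not_swap @hfib)
    (fiberLexSBtw_or_swap @htot) (fun h h' => h.trans_left @hfib h')

end FiberLex

section LeftCoset

variable {G : Type*} [Group G] (H : Subgroup G)

def LeftCosetLT [LT H] (u v : G) : Prop :=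
  ∃ h : H, 1 < h ∧ v = u * h

instance [Preorder H] [MulLeftStrictMono H] : IsStrictOrder G (LeftCosetLT H) where
  irrefl u := by
    rintro ⟨h, hpos, hu⟩
    exact hpos.ne' (Subtype.ext (left_eq_mul.mp hu))
  trans := by
    rintro u _ _ ⟨h, hpos, rfl⟩ ⟨k, kpos, rfl⟩
    exact ⟨h * k, one_lt_mul' hpos kpos, by simp [mul_assoc]⟩

variable {H}

theorem LeftCosetLT.mul_left [LT H] (g : G) {u v : G} (huv : LeftCosetLT H u v) :
    LeftCosetLT H (g * u) (g * v) := by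
  obtain ⟨h, hpos, rfl⟩ := huv
  exact ⟨h, hpos, (mul_assoc g u h).symm⟩

theorem leftCosetLT_or_leftCosetLT [LinearOrder H] [MulLeftMono H] {u v : G}
    (hmem : u⁻¹ * v ∈ H) (hne : u ≠ v) : LeftCosetLT H u v ∨ LeftCosetLT H v u := by
  set h : H := ⟨u⁻¹ * v, hmem⟩
  have hne1 : h ≠ 1 := fun h1 => hne (inv_mul_eq_one.mp (congrArg Subtype.val h1))
  rcases hne1.lt_or_gt with hneg | hpos
  · exact .inr ⟨h⁻¹, one_lt_inv_of_inv hneg, by simp [h]⟩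
  · exact .inl ⟨h, hpos, by simp [h]⟩

end LeftCoset

section Stabilizer

variable {G X : Type*} [Group G] [MulAction G X] {a : X} {u v : G}

theorem LeftCosetLT.smul_eq [LT (stabilizer G a)]
    (huv : LeftCosetLT (stabilizer G a) u v) : u • a = v • a := by
  obtain ⟨h, -, rfl⟩ := huv
  rw [mul_smul, mem_stabilizer_iff.mp h.2]

theorem inv_mul_mem_stabilizer_of_smul_eq (huv : u • a = v • a) : u⁻¹ * v ∈ stabilizer G a := by
  rw [mem_stabilizer_iff, mul_smul, ← huv, inv_smul_smul]

end Stabilizer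

/-- Let `X` be a circularly ordered set and `G` a group acting on `X`
preserving strict betweenness.  If for some `a ∈ X` the stabilizer subgroup `St(a)` admits a
left-invariant linear order, then `G` admits a left-invariant circular order. -/
theorem left_circular_orderable_of_stabilizer_left_orderable
    {X : Type*} [CircularOrder X] {G : Type*} [Group G] [MulAction G X]
    (hG : ∀ (g : G) (a b c : X), sbtw a b c → sbtw (g • a) (g • b) (g • c))
    (a : X)
    (hstab : ∃ lo : LinearOrder (MulAction.stabilizer G a),
      ∀ (h h₁ h₂ : MulAction.stabilizer G a), lo.le h₁ h₂ → lo.le (h * h₁) (h * h₂)) :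
    ∃ c : CircularOrder G, ∀ g x y z : G,
      csbtw c x y z ↔ csbtw c (g * x) (g * y) (g * z) := by
  obtain ⟨lo, hmono⟩ := hstab
  let _ := lo
  have : MulLeftMono (stabilizer G a) := ⟨fun h _ _ => hmono h _ _⟩
  let R := FiberLexSBtw (· • a : G → X) (LeftCosetLT (stabilizer G a))
  have invariant (g : G) {x y z : G} (h : R x y z) : R (g * x) (g * y) (g * z) :=
    h.map (fun x => mul_smul g x a) (MulAction.injective g) (hG g _ _ _) (.mul_left g)
  refine ⟨fiberLexCircularOrder (· • a) (LeftCosetLT (stabilizer G a)) LeftCosetLT.smul_eq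
    fun hxy hne => leftCosetLT_or_leftCosetLT (inv_mul_mem_stabilizer_of_smul_eq hxy) hne,
    fun g x y z => ?_⟩
  show R x y z ↔ R (g * x) (g * y) (g * z)
  exact ⟨invariant g, fun h => by simpa using invariant g⁻¹ h⟩
end

section
/- Let X be a circularly ordered set equipped with its circular topology τ∘. Then the set {(a,b,c) ∈ X × X × X | sbtw a b c} is open in the product topology; equivalently, whenever sbtw a b c holds there exist τ∘-open neighborhoods U, V, W of a, b, c respectively such that sbtw a' b' c' holds for every (a',b',c') ∈ U × V × W. -/
/-!
Given `sbtw a b c`, choose on each of the arcs from `a` to `b`, `b` to `c`, `c` to `a` a pair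
`l ≤ r` with nothing strictly between them: `l = r` a point strictly inside the arc if there is
one, otherwise the two endpoints of the (then empty) arc. The open arcs `(l₃,r₁)`, `(l₁,r₂)`,
`(l₂,r₃)` are neighbourhoods of `a`, `b`, `c`; as each `(lᵢ,rᵢ)` is empty they lie in the
half-open arcs `[r₃,r₁)`, `[r₁,r₂)`, `[r₂,r₃)`, and points taken from these are in circular
order because `sbtw r₃ r₁ r₂`.
-/

namespace Set

variable {α : Type*} [CircularOrder α]

def cIco (a b : α) : Set α :=
  {x | btw a x b ∧ x ≠ b}

def cIoc (a b : α) : Set α :=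
  {x | btw a x b ∧ x ≠ a}

theorem cIoo_self_s5 (a : α) : cIoo a a = ∅ :=
  eq_empty_iff_forall_notMem.2 fun _ => sbtw_irrefl_left_right

end Set

section CircularOrder

open Set

variable {α : Type*} [CircularOrder α] {a b c x y z u v w l r s : α}

theorem SBtw.sbtw.left_ne (h : sbtw a b c) : a ≠ b := by
  rintro rfl
  exact sbtw_irrefl_left h

theorem SBtw.sbtw.ne_right (h : sbtw a b c) : b ≠ c := by
  rintro rfl
  exact sbtw_irrefl_right h

theorem SBtw.sbtw.left_ne_right (h : sbtw a b c) : a ≠ c := by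
  rintro rfl
  exact sbtw_irrefl_left_right h

theorem sbtw_of_btw_of_ne (h : btw a b c) (hba : b ≠ a) (hbc : b ≠ c) (hac : a ≠ c) :
    sbtw a b c := by
  refine sbtw_of_btw_not_btw h fun h' => ?_
  rcases h.antisymm h' with h1 | h1 | h1
  exacts [hba h1.symm, hbc h1, hac h1.symm]

theorem sbtw_of_mem_cIco_left (h : sbtw x y z) (hu : u ∈ cIco x y) : sbtw u y z := by
  obtain rfl | hux := eq_or_ne u x
  · exact h
  · exact (h.cyclic_right.trans_left (sbtw_of_btw_of_ne hu.1 hux hu.2 h.left_ne)).cyclic_left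

theorem sbtw_of_mem_cIoc_right (h : sbtw x y z) (hw : w ∈ cIoc y z) : sbtw x y w :=
  sbtw_of_mem_cIco_left (α := αᵒᵈ) (x := OrderDual.toDual z) h hw

theorem sbtw_of_mem_cIco (h : sbtw x y z) (hu : u ∈ cIco x y) (hv : v ∈ cIco y z)
    (hw : w ∈ cIco z x) : sbtw u v w := by
  have huvz : sbtw u v z :=
    (sbtw_of_mem_cIco_left (sbtw_of_mem_cIco_left h hu).cyclic_left hv).cyclic_right
  obtain rfl | hwz := eq_or_ne w z
  · exact huvz
  have hzwx : sbtw z w x := sbtw_of_btw_of_ne hw.1 hwz hw.2 h.left_ne_right.symm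
  have hzwu : sbtw z w u := by
    obtain rfl | hux := eq_or_ne u x
    · exact hzwx
    · exact hzwx.trans_right
        ((sbtw_of_btw_of_ne hu.1 hux hu.2 h.left_ne).trans_right h).cyclic_right
  exact huvz.trans_right hzwu.cyclic_right

theorem sbtw_of_mem_cIoc (h : sbtw x y z) (hu : u ∈ cIoc x y) (hv : v ∈ cIoc y z)
    (hw : w ∈ cIoc z x) : sbtw u v w :=
  (show sbtw w u v from
    sbtw_of_mem_cIco (α := αᵒᵈ) (x := OrderDual.toDual z) h hv hu hw).cyclic_left

theorem cIoo_subset_cIco_of_cIoo_eq_empty (hlr : cIoo l r = ∅) : cIoo l s ⊆ cIco r s := by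
  refine fun u hu => ⟨?_, hu.ne_right⟩
  by_contra h
  have hsur : sbtw s u r := sbtw_iff_not_btw.mpr h
  exact hlr.subset ((hsur.cyclic_left.trans_right hu.cyclic_left).cyclic_right)

structure IsArcSplit (a b l r : α) : Prop where
  left_mem : l ∈ cIco a b
  right_mem : r ∈ cIoc a b
  cIoo_eq_empty : cIoo l r = ∅

theorem exists_isArcSplit (hab : a ≠ b) : ∃ l r, IsArcSplit a b l r := by
  by_cases h : (cIoo a b).Nonempty
  · obtain ⟨p, hp⟩ := h
    exact ⟨p, p, ⟨hp.btw, hp.ne_right⟩, ⟨hp.btw, hp.left_ne.symm⟩, cIoo_self_s5 p⟩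
  · exact ⟨a, b, ⟨btw_rfl_left, hab⟩, ⟨btw_rfl_right, hab.symm⟩, not_nonempty_iff_eq_empty.1 h⟩

theorem IsArcSplit.mem_cIoo {l₁ r₁ l₃ r₃ : α} (hca : IsArcSplit c a l₃ r₃)
    (hab : IsArcSplit a b l₁ r₁) (h : sbtw a b c) : a ∈ cIoo l₃ r₁ :=
  sbtw_of_mem_cIoc_right (sbtw_of_mem_cIco_left h.cyclic_right hca.left_mem) hab.right_mem

theorem exists_isOpen_nhds_sbtw [TopologicalSpace α] (hopen : ∀ s t : α, IsOpen (cIoo s t))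
    (h : sbtw a b c) : ∃ U V W : Set α, IsOpen U ∧ IsOpen V ∧ IsOpen W ∧ a ∈ U ∧ b ∈ V ∧ c ∈ W ∧
      ∀ a' ∈ U, ∀ b' ∈ V, ∀ c' ∈ W, sbtw a' b' c' := by
  obtain ⟨l₁, r₁, h₁⟩ := exists_isArcSplit h.left_ne
  obtain ⟨l₂, r₂, h₂⟩ := exists_isArcSplit h.ne_right
  obtain ⟨l₃, r₃, h₃⟩ := exists_isArcSplit h.left_ne_right.symm
  refine ⟨cIoo l₃ r₁, cIoo l₁ r₂, cIoo l₂ r₃, hopen _ _, hopen _ _, hopen _ _,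
    h₃.mem_cIoo h₁ h, h₁.mem_cIoo h₂ h.cyclic_left, h₂.mem_cIoo h₃ h.cyclic_right, ?_⟩
  intro u hu v hv w hw
  have hr : sbtw r₃ r₁ r₂ :=
    sbtw_of_mem_cIoc h.cyclic_right h₃.right_mem h₁.right_mem h₂.right_mem
  exact sbtw_of_mem_cIco hr (cIoo_subset_cIco_of_cIoo_eq_empty h₃.cIoo_eq_empty hu)
    (cIoo_subset_cIco_of_cIoo_eq_empty h₁.cIoo_eq_empty hv)
    (cIoo_subset_cIco_of_cIoo_eq_empty h₂.cIoo_eq_empty hw)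

end CircularOrder

theorem cIcc_eq_cIcc {X : Type*} [CircularOrder X] {a b : X} (hab : a ≠ b) :
    cIcc a b = Set.cIcc a b := by
  ext x
  simp only [cIcc, Set.mem_cIcc, Set.mem_union, Set.mem_ofPred_eq, Set.mem_insert_iff,
    Set.mem_singleton_iff]
  refine ⟨?_, fun hx => ?_⟩
  · rintro (hx | rfl | rfl)
    exacts [hx.btw, btw_rfl_left, btw_rfl_right]
  · by_cases hxa : x = a
    · exact Or.inr (Or.inl hxa)
    by_cases hxb : x = b
    · exact Or.inr (Or.inr hxb)
    exact Or.inl (sbtw_of_btw_of_ne hx hxa hxb hab)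

open Topology in
theorem isOpen_cIoo_circularTopology {X : Type*} [CircularOrder X] (s t : X) :
    IsOpen[circularTopology X] (Set.cIoo s t) := by
  obtain rfl | hst := eq_or_ne s t
  · rw [Set.cIoo_self_s5]
    exact @isOpen_empty X (circularTopology X)
  · rw [← Set.compl_cIcc, ← cIcc_eq_cIcc hst.symm]
    exact TopologicalSpace.isOpen_generateFrom_of_mem ⟨t, s, rfl⟩

/-- For a circularly ordered set `X` with its circular topology, the set
`{(a,b,c) | sbtw a b c}` is open in the product topology; equivalently, whenever `sbtw a b c`
there are open neighborhoods `U, V, W` of `a, b, c` such that `sbtw a' b' c'` for all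
`(a',b',c') ∈ U × V × W`. -/
theorem sbtw_isOpen (X : Type*) [CircularOrder X]
    [ts : TopologicalSpace X] (hts : ts = circularTopology X) :
    IsOpen {p : X × X × X | sbtw p.1 p.2.1 p.2.2} ∧
      ∀ a b c : X, sbtw a b c → ∃ U V W : Set X,
        IsOpen U ∧ IsOpen V ∧ IsOpen W ∧ a ∈ U ∧ b ∈ V ∧ c ∈ W ∧
          ∀ a' ∈ U, ∀ b' ∈ V, ∀ c' ∈ W, sbtw a' b' c' := by
  have hopen (s t : X) : IsOpen (Set.cIoo s t) := hts ▸ isOpen_cIoo_circularTopology s t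
  have hnhds := fun (a b c : X) (h : sbtw a b c) => exists_isOpen_nhds_sbtw hopen h
  refine ⟨isOpen_iff_forall_mem_open.2 ?_, hnhds⟩
  rintro ⟨a, b, c⟩ h
  obtain ⟨U, V, W, hU, hV, hW, ha, hb, hc, hUVW⟩ := hnhds a b c h
  exact ⟨U ×ˢ V ×ˢ W, fun p hp => hUVW _ hp.1 _ hp.2.1 _ hp.2.2, hU.prod (hV.prod hW), ha, hb, hc⟩
end

section
/- For an abstract group G the following are equivalent: (1) G admits a left-invariant circular order, i.e., a circular order on G whose strict betweenness satisfies sbtw x y z ↔ sbtw (g*x) (g*y) (g*z) for all g, x, y, z ∈ G; (2) there exist a circularly ordered set X and an injective group homomorphism from G into the group of circular-order automorphisms of X (bijections of X preserving sbtw); equivalently, G admits an effective action on some circularly ordered set by sbtw-preserving bijections. -/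
/-!
Left multiplication makes a left-invariant circular order into an effective action of `G` on
itself. Conversely, given an effective action on `X`, fix `x₀ ∈ X` and pull the circular order
of `X` back along the orbit map `g ↦ g • x₀`. This only fails to be a circular order on `G`
because of ties inside the fibres, and those are broken lexicographically: over `p ∈ X` compare
`f` and `g` at the first point `x` (for a fixed well-order of `X`) with `f • x ≠ g • x`, in the
linear order obtained by cutting the circle `X` open at `p`. Every ingredient is carried along
by the action, so the resulting circular order is left-invariant.
-/

universe u

open Function

section CircularOrder

variable {α β : Type*} [CircularOrder α] [CircularOrder β]

theorem sbtw_or_sbtw_swap {a b c : α} (hab : a ≠ b) (hbc : b ≠ c) (hca : c ≠ a) :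
    sbtw a b c ∨ sbtw c b a := by
  by_contra! h
  rw [sbtw_iff_not_btw, sbtw_iff_not_btw, not_not, not_not] at h
  rcases h.2.antisymm h.1 with h | h | h <;> simp_all [eq_comm]

theorem sbtw_map_iff {f : α → β} (hf : ∀ a b c, sbtw a b c → sbtw (f a) (f b) (f c))
    {a b c : α} : sbtw (f a) (f b) (f c) ↔ sbtw a b c := by
  refine ⟨fun h => ?_, hf a b c⟩
  by_contra hn
  rw [sbtw_iff_not_btw, not_not] at hn
  by_cases h' : btw a b c
  · rcases h'.antisymm hn with rfl | rfl | rfl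
    exacts [sbtw_irrefl_left h, sbtw_irrefl_right h, sbtw_irrefl_left_right h]
  · exact sbtw_asymm h (hf c b a (sbtw_of_btw_not_btw hn h'))

def cutLT (p u v : α) : Prop := (u = p ∧ v ≠ p) ∨ sbtw p u v

instance (p : α) : IsStrictTotalOrder α (cutLT p) where
  irrefl u h := by
    rcases h with ⟨rfl, h⟩ | h
    exacts [h rfl, sbtw_irrefl_right h]
  trans u v w := by
    rintro (⟨rfl, hv⟩ | huv) (⟨rfl, hw⟩ | hvw)
    · exact absurd rfl hv
    · exact .inl ⟨rfl, fun h => sbtw_irrefl_left_right (h ▸ hvw)⟩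
    · exact absurd huv sbtw_irrefl_left_right
    · exact .inr (huv.cyclic_left.trans_left hvw.cyclic_left).cyclic_right
  trichotomous u v huv hvu := by
    by_contra h
    by_cases hu : u = p
    · subst hu; exact huv (.inl ⟨rfl, Ne.symm h⟩)
    by_cases hv : v = p
    · subst hv; exact hvu (.inl ⟨rfl, hu⟩)
    rcases sbtw_or_sbtw_swap (Ne.symm hu) h hv with h' | h'
    exacts [huv (.inr h'), hvu (.inr h'.cyclic_right)]

theorem cutLT_map_iff {f : α → β} (hf : Injective f)
    (hf_sbtw : ∀ a b c, sbtw a b c → sbtw (f a) (f b) (f c)) {p u v : α} :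
    cutLT (f p) (f u) (f v) ↔ cutLT p u v := by
  simp only [cutLT, hf.eq_iff, hf.ne_iff, sbtw_map_iff hf_sbtw]

end CircularOrder

section PiLex

variable {ι β γ : Type*} {r : ι → ι → Prop}

theorem Pi.isStrictTotalOrder_lex {s : β → β → Prop} [IsWellOrder ι r]
    [IsStrictTotalOrder β s] : IsStrictTotalOrder (ι → β) (Pi.Lex r (fun {_} => s)) :=
  letI : LinearOrder ι := IsWellOrder.linearOrder r
  letI : PartialOrder β := partialOrderOfSO s
  { Pi.trichotomous_lex r _ IsWellFounded.wf, Pi.Lex.isStrictOrder (β := fun _ => β) with }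

theorem Pi.lex_comp_iff {s : β → β → Prop} {t : γ → γ → Prop} {f : β → γ} (hf : Injective f)
    (hst : ∀ u v, t (f u) (f v) ↔ s u v) {x y : ι → β} :
    Pi.Lex r (fun {_} => t) (f ∘ x) (f ∘ y) ↔ Pi.Lex r (fun {_} => s) x y := by
  simp only [Pi.Lex, comp_apply, hf.eq_iff, hst]

end PiLex

section LexComap

variable {C Y : Type*} [CircularOrder C] {π : Y → C} {ord : C → Y → Y → Prop}

variable (π ord) in
/-- Ties of the pulled-back circular order are broken by `ord p` inside the fibre over `p`. -/
def LexSbtw (a b c : Y) : Prop :=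
  sbtw (π a) (π b) (π c) ∨
  (π a = π b ∧ π a ≠ π c ∧ ord (π a) a b) ∨
  (π b = π c ∧ π b ≠ π a ∧ ord (π b) b c) ∨
  (π c = π a ∧ π c ≠ π b ∧ ord (π c) c a) ∨
  (π a = π b ∧ π b = π c ∧
    (ord (π a) a b ∧ ord (π a) b c ∨ ord (π a) b c ∧ ord (π a) c a ∨
      ord (π a) c a ∧ ord (π a) a b))

theorem LexSbtw.cyclic_left {a b c : Y} (h : LexSbtw π ord a b c) : LexSbtw π ord b c a := by
  unfold LexSbtw at *
  rcases h with h | h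
  · exact .inl h.cyclic_left
  · grind

theorem lexSbtw_map_iff {e : Y → Y} {τ : C → C} (hτ : Injective τ)
    (hτ_sbtw : ∀ a b c, sbtw a b c → sbtw (τ a) (τ b) (τ c)) (hπ : ∀ y, π (e y) = τ (π y))
    (hord : ∀ p a b, ord (τ p) (e a) (e b) ↔ ord p a b) {a b c : Y} :
    LexSbtw π ord (e a) (e b) (e c) ↔ LexSbtw π ord a b c := by
  simp only [LexSbtw, hπ, hτ.eq_iff, hτ.ne_iff, hord, sbtw_map_iff hτ_sbtw]

variable [∀ p, IsStrictTotalOrder Y (ord p)]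

theorem LexSbtw.irrefl_left {a b : Y} : ¬LexSbtw π ord a a b := by
  have asymm p {a b : Y} : ord p a b → ¬ord p b a := asymm_of (ord p)
  unfold LexSbtw
  grind [sbtw_irrefl_left]

theorem LexSbtw.asymm {a b c : Y} (h : LexSbtw π ord a b c) : ¬LexSbtw π ord c b a := by
  have asymm p {a b : Y} : ord p a b → ¬ord p b a := asymm_of (ord p)
  have trans p {a b c : Y} : ord p a b → ord p b c → ord p a c := trans_of (ord p)
  unfold LexSbtw at *
  grind [sbtw_asymm, sbtw_irrefl_left, sbtw_irrefl_right, sbtw_irrefl_left_right]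

theorem LexSbtw.trans_left {a b c d : Y} (h : LexSbtw π ord a b c)
    (h' : LexSbtw π ord b d c) : LexSbtw π ord a d c := by
  have asymm p {a b : Y} : ord p a b → ¬ord p b a := asymm_of (ord p)
  have trans p {a b c : Y} : ord p a b → ord p b c → ord p a c := trans_of (ord p)
  unfold LexSbtw at *
  rcases h with h | h | h | h | h <;> rcases h' with h' | h' | h' | h' | h'
  · exact .inl (h.trans_left h')
  all_goals grind [sbtw_irrefl_left, sbtw_irrefl_right, sbtw_irrefl_left_right]

theorem lexSbtw_or_lexSbtw_swap {a b c : Y} (hab : a ≠ b) (hbc : b ≠ c) (hca : c ≠ a) :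
    LexSbtw π ord a b c ∨ LexSbtw π ord c b a := by
  have trichotomous p {a b : Y} : ¬ord p a b → ¬ord p b a → a = b :=
    Std.Trichotomous.trichotomous a b
  unfold LexSbtw
  by_cases hab' : π a = π b <;> by_cases hbc' : π b = π c <;> by_cases hca' : π c = π a
  all_goals grind [sbtw_or_sbtw_swap]

variable (π ord) in
abbrev CircularOrder.lexComap : CircularOrder Y where
  btw a b c := ¬LexSbtw π ord c b a
  sbtw := LexSbtw π ord
  btw_refl _ := LexSbtw.irrefl_left (π := π) (ord := ord)
  btw_cyclic_left h h' := h h'.cyclic_left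
  sbtw_trans_left := LexSbtw.trans_left
  sbtw_iff_btw_not_btw := ⟨fun h => ⟨h.asymm, not_not_intro h⟩, fun h => not_not.1 h.2⟩
  btw_antisymm {a b c} h h' := by
    by_contra! hne
    exact (lexSbtw_or_lexSbtw_swap (π := π) (ord := ord) hne.1 hne.2.1 hne.2.2).elim h' h
  btw_total a b c := (em (LexSbtw π ord c b a)).symm.imp id fun h => h.asymm

end LexComap

section Action

variable {G X : Type*} [Group G] [CircularOrder X] (φ : G →* Equiv.Perm X)

def permLex (p : X) (f g : G) : Prop :=
  Pi.Lex WellOrderingRel (fun {_} => cutLT p) (φ f) (φ g)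

theorem isStrictTotalOrder_permLex (hφ : Injective φ) (p : X) :
    IsStrictTotalOrder G (permLex φ p) :=
  have := Pi.isStrictTotalOrder_lex (r := (WellOrderingRel : X → X → Prop)) (s := cutLT p)
  (DFunLike.coe_injective.comp hφ).isStrictTotalOrder_onFun _

theorem permLex_mul_iff (hφ_sbtw : ∀ g a b c, sbtw a b c → sbtw (φ g a) (φ g b) (φ g c))
    (k : G) (p : X) {f g : G} : permLex φ (φ k p) (k * f) (k * g) ↔ permLex φ p f g := by
  simp only [permLex, map_mul, Equiv.Perm.coe_mul]
  exact Pi.lex_comp_iff (φ k).injective fun _ _ => cutLT_map_iff (φ k).injective (hφ_sbtw k)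

theorem lexSbtw_orbit_mul_iff (hφ_sbtw : ∀ g a b c, sbtw a b c → sbtw (φ g a) (φ g b) (φ g c))
    (x₀ : X) (k f g h : G) :
    LexSbtw (fun g => φ g x₀) (permLex φ) (k * f) (k * g) (k * h) ↔
      LexSbtw (fun g => φ g x₀) (permLex φ) f g h :=
  lexSbtw_map_iff (φ k).injective (hφ_sbtw k) (fun y => by rw [map_mul, Equiv.Perm.mul_apply])
    fun p _ _ => permLex_mul_iff φ hφ_sbtw k p

end Action

/-- A group `G` admits a left-invariant circular order if and only if there
exist a circularly ordered set `X` and an injective group homomorphism of `G` into the group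
of circular-order automorphisms of `X`, i.e. `G` admits an effective action on some circularly
ordered set by `sbtw`-preserving bijections. -/
theorem left_circularly_orderable_iff_effective_action
    {G : Type u} [Group G] :
    (∃ c : CircularOrder G, ∀ g x y z : G,
        csbtw c x y z ↔ csbtw c (g * x) (g * y) (g * z)) ↔
      (∃ (X : Type u) (cX : CircularOrder X) (φ : G →* Equiv.Perm X),
        Function.Injective φ ∧
          ∀ (g : G) (a b c : X), csbtw cX a b c → csbtw cX (φ g a) (φ g b) (φ g c)) := by
  constructor
  · rintro ⟨c, hc⟩
    exact ⟨G, c, MulAction.toPermHom G G, MulAction.toPerm_injective,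
      fun g a b c h => (hc g a b c).1 h⟩
  · rintro ⟨X, cX, φ, hφ, hφ_sbtw⟩
    let := cX
    rcases isEmpty_or_nonempty X with hX | ⟨⟨x₀⟩⟩
    · have : Subsingleton G := hφ.subsingleton
      let := IsWellOrder.linearOrder (WellOrderingRel : G → G → Prop)
      exact ⟨LinearOrder.toCircularOrder G, fun g x y z => by simp [Subsingleton.elim g 1]⟩
    · have := isStrictTotalOrder_permLex φ hφ
      exact ⟨.lexComap (fun g => φ g x₀) (permLex φ),
        fun k f g h => (lexSbtw_orbit_mul_iff φ hφ_sbtw x₀ k f g h).symm⟩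
end

section
/- Let (X, ≤) be a linearly ordered set and G a group acting on X effectively by order automorphisms (order-preserving bijections). Then there exist: a compact Hausdorff totally disconnected space X∞ equipped with a linear order whose order (interval) topology coincides with its topology; an action of G on X∞ by order-preserving homeomorphisms which is jointly continuous when G carries the topology of pointwise convergence on the discrete set X; and a G-equivariant injective order-preserving map ν : X → X∞ with dense image whose image is a discrete subspace of X∞. Moreover: (i) if ≤_G is a linear order on G such that for every x ∈ X the orbit map g ↦ g•x from (G, ≤_G) to (X, ≤) is monotone, then for every a ∈ X∞ the orbit map g ↦ g•a from (G, ≤_G) to X∞ is monotone; (ii) if X is countable then X∞ is metrizable. -/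
/-!
Double every point of `X` to a pair `(x, false) < (x, true)` in `X ×ₗ Bool`. The lower sets of
`X ×ₗ Bool` form a complete linear order, hence a compact Hausdorff space in the order topology,
and membership of a fixed point is a clopen condition on them; so this space embeds into the
Cantor cube `X ×ₗ Bool → Bool`, which gives total disconnectedness and, for countable `X`,
metrizability. `X∞` is the closure of the lower sets `Iic (x, false)`, which are isolated because
`(x, true)` covers `(x, false)`. On a closed subspace of a compact linear order, the order topology
is Hausdorff and coarser than the compact subspace topology, hence equal to it. `G` translates
lower sets, and whether `p ∈ g • S` depends only on `g⁻¹ • p`, a locally constant function of `g`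
in the topology of pointwise convergence: this gives joint continuity.
-/

open Set Topology
open scoped Pointwise

section OrderedAction

variable {G α : Type*} [Group G] [Preorder α] [MulAction G α]
  [CovariantClass G α HSMul.hSMul LE.le]

lemma smul_le_smul_iff_right (g : G) {a b : α} : g • a ≤ g • b ↔ a ≤ b :=
  ⟨fun h => by simpa using smul_mono_right g⁻¹ h, fun h => smul_mono_right g h⟩

lemma smul_lt_smul_iff_right (g : G) {a b : α} : g • a < g • b ↔ a < b :=
  lt_iff_lt_of_le_iff_le' (smul_le_smul_iff_right g) (smul_le_smul_iff_right g)

end OrderedAction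

namespace LowerSet

variable {α : Type*} [LinearOrder α]

noncomputable instance : TopologicalSpace (LowerSet α) := Preorder.topology _

instance : OrderTopology (LowerSet α) := ⟨rfl⟩

lemma setOf_mem_eq_Ioi (p : α) : {S : LowerSet α | p ∈ S} = Set.Ioi (Iio p) := by
  ext S
  rw [Set.mem_Ioi, ← not_le, ← coe_subset_coe, Set.subset_def]
  simp only [SetLike.mem_coe, mem_Iio_iff, not_forall, not_lt, exists_prop]
  exact ⟨fun hp => ⟨p, hp, le_rfl⟩, fun ⟨q, hq, hpq⟩ => S.lower hpq hq⟩

lemma setOf_notMem_eq_Iio (p : α) : {S : LowerSet α | p ∉ S} = Set.Iio (Iic p) := by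
  ext S
  rw [Set.mem_Iio, ← not_le, ← coe_subset_coe, Set.subset_def]
  simp only [SetLike.mem_coe, mem_Iic_iff, not_forall, exists_prop]
  exact ⟨fun hp => ⟨p, le_rfl, hp⟩, fun ⟨q, hqp, hq⟩ hp => hq (S.lower hqp hp)⟩

lemma isOpen_setOf_mem (p : α) : IsOpen {S : LowerSet α | p ∈ S} :=
  setOf_mem_eq_Ioi p ▸ isOpen_Ioi

lemma isOpen_setOf_notMem (p : α) : IsOpen {S : LowerSet α | p ∉ S} :=
  setOf_notMem_eq_Iio p ▸ isOpen_Iio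

open scoped Classical in
theorem isClosedEmbedding_decide_mem :
    IsClosedEmbedding fun (S : LowerSet α) (p : α) => decide (p ∈ S) := by
  refine Continuous.isClosedEmbedding (continuous_pi fun p => continuous_discrete_rng.2 ?_) ?_
  · rintro (_ | _)
    · convert isOpen_setOf_notMem p using 1
      ext S
      simp
    · convert isOpen_setOf_mem p using 1
      ext S
      simp
  · intro S T h
    ext p
    simpa using congrFun h p

instance : TotallyDisconnectedSpace (LowerSet α) :=
  (isClosedEmbedding_decide_mem.isEmbedding.isTotallyDisconnected_range).1
    (isTotallyDisconnected_of_totallyDisconnectedSpace _)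

lemma eq_Iic_iff_of_covBy {a b : α} (hab : a ⋖ b) {S : LowerSet α} :
    S = Iic a ↔ a ∈ S ∧ b ∉ S := by
  constructor
  · rintro rfl
    simpa using hab.lt
  · rintro ⟨ha, hb⟩
    ext q
    simp only [SetLike.mem_coe, mem_Iic_iff]
    exact ⟨fun hq => not_lt.1 fun haq => hb (S.lower (hab.ge_of_gt haq) hq),
      fun hqa => S.lower hqa ha⟩

lemma isOpen_singleton_Iic_of_covBy {a b : α} (hab : a ⋖ b) : IsOpen {Iic a} := by
  have : ({Iic a} : Set (LowerSet α)) = {S | a ∈ S} ∩ {S | b ∉ S} := by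
    ext S
    exact eq_Iic_iff_of_covBy hab
  exact this ▸ (isOpen_setOf_mem a).inter (isOpen_setOf_notMem b)

variable {G : Type*} [Group G] [MulAction G α] [CovariantClass G α HSMul.hSMul LE.le]

instance : MulAction G (LowerSet α) where
  smul g S := ⟨g • (S : Set α), by
    rintro a b hba ⟨c, hc, rfl⟩
    refine ⟨g⁻¹ • b, S.lower ?_ hc, smul_inv_smul g b⟩
    rwa [← smul_le_smul_iff_right g, smul_inv_smul]⟩
  one_smul S := SetLike.coe_injective (one_smul G (S : Set α))
  mul_smul g h S := SetLike.coe_injective (mul_smul g h (S : Set α))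

lemma mem_smul_iff_inv_smul_mem {g : G} {S : LowerSet α} {a : α} : a ∈ g • S ↔ g⁻¹ • a ∈ S :=
  Set.mem_smul_set_iff_inv_smul_mem

instance : CovariantClass G (LowerSet α) HSMul.hSMul LE.le :=
  ⟨fun g _ _ h => Set.smul_set_mono (a := g) (coe_subset_coe.2 h)⟩

lemma smul_Iic (g : G) (a : α) : g • Iic a = Iic (g • a) := by
  ext b
  rw [SetLike.mem_coe, SetLike.mem_coe, mem_smul_iff_inv_smul_mem, mem_Iic_iff, mem_Iic_iff,
    ← smul_le_smul_iff_right g, smul_inv_smul]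

instance : ContinuousConstSMul G (LowerSet α) :=
  ⟨fun g => OrderIso.continuous (⟨MulAction.toPerm g, smul_le_smul_iff_right g⟩ :
    LowerSet α ≃o LowerSet α)⟩

lemma smul_le_smul_of_forall_smul_le {g h : G} (hgh : ∀ a : α, g • a ≤ h • a)
    (S : LowerSet α) : g • S ≤ h • S := by
  intro a ha
  rw [SetLike.mem_coe, mem_smul_iff_inv_smul_mem] at ha ⊢
  refine S.lower ?_ ha
  rw [← smul_le_smul_iff_right g, smul_inv_smul]
  simpa using hgh (h⁻¹ • a)

open scoped Classical in
lemma continuous_smul_of_isOpen_setOf_smul_eq [TopologicalSpace G]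
    (hG : ∀ a b : α, IsOpen {g : G | g • a = b}) :
    Continuous fun x : G × LowerSet α => x.1 • x.2 := by
  have hdec := isClosedEmbedding_decide_mem (α := α)
  refine hdec.continuous_iff.2 (continuous_pi fun b => continuous_discrete_rng.2 fun c => ?_)
  change IsOpen ((fun x : G × LowerSet α => decide (b ∈ x.1 • x.2)) ⁻¹' {c})
  have : (fun x : G × LowerSet α => decide (b ∈ x.1 • x.2)) ⁻¹' {c} =
      ⋃ a : α, {g : G | g • a = b} ×ˢ ((fun S : LowerSet α => decide (a ∈ S)) ⁻¹' {c}) := by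
    ext ⟨g, S⟩
    simp only [mem_preimage, mem_singleton_iff, mem_smul_iff_inv_smul_mem, mem_iUnion]
    exact ⟨fun h => ⟨g⁻¹ • b, smul_inv_smul g b, h⟩, by rintro ⟨a, rfl, h⟩; simpa using h⟩
  rw [this]
  exact isOpen_iUnion fun a => (hG a b).prod
    (((continuous_apply a).comp hdec.continuous).isOpen_preimage _ (isOpen_discrete _))

end LowerSet

namespace Prod.Lex

variable {G α β : Type*} [Group G] [MulAction G α]

instance : MulAction G (α ×ₗ β) where
  smul g p := toLex (g • (ofLex p).1, (ofLex p).2)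
  one_smul p := congrArg toLex (Prod.ext (one_smul G (ofLex p).1) rfl)
  mul_smul g h p := congrArg toLex (Prod.ext (mul_smul g h (ofLex p).1) rfl)

@[simp]
lemma smul_toLex (g : G) (a : α) (b : β) : g • toLex (a, b) = toLex (g • a, b) := rfl

lemma isOpen_setOf_smul_eq [TopologicalSpace G] (hG : ∀ a b : α, IsOpen {g : G | g • a = b})
    (p q : α ×ₗ β) : IsOpen {g : G | g • p = q} := by
  have : {g : G | g • p = q} =
      {g | g • (ofLex p).1 = (ofLex q).1} ∩ {_g | (ofLex p).2 = (ofLex q).2} := by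
    ext g
    exact toLex.injective.eq_iff.trans Prod.ext_iff
  exact this ▸ (hG _ _).inter isOpen_const

variable [PartialOrder α] [Preorder β]

lemma smul_le_smul_of_forall_smul_le {g h : G} (hgh : ∀ a : α, g • a ≤ h • a) (p : α ×ₗ β) :
    g • p ≤ h • p :=
  toLex_mono (show (g • (ofLex p).1, (ofLex p).2) ≤ (h • (ofLex p).1, (ofLex p).2) from
    ⟨hgh (ofLex p).1, le_rfl⟩)

variable [CovariantClass G α HSMul.hSMul LE.le]

instance : CovariantClass G (α ×ₗ β) HSMul.hSMul LE.le := by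
  refine ⟨fun g p q h => ?_⟩
  obtain ⟨⟨a, b⟩, rfl⟩ := toLex.surjective p
  obtain ⟨⟨a', b'⟩, rfl⟩ := toLex.surjective q
  simpa only [smul_toLex, toLex_le_toLex, smul_lt_smul_iff_right, smul_left_cancel_iff] using h

end Prod.Lex

lemma TopologicalSpace.eq_of_le_of_compactSpace {β : Type*} {t t' : TopologicalSpace β}
    (h : t ≤ t') [@CompactSpace β t] [@T2Space β t'] : t = t' :=
  (@IsInducing.eq_induced β β t t' id (@IsClosedEmbedding.isInducing β β id t t'
    (@Continuous.isClosedEmbedding β β t t' _ _ id (continuous_id_iff_le.2 h)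
      Function.injective_id))).trans induced_id

lemma IsClosed.orderTopology {β : Type*} [TopologicalSpace β] [LinearOrder β] [OrderTopology β]
    [CompactSpace β] {s : Set β} (hs : IsClosed s) : OrderTopology s := by
  have := isCompact_iff_compactSpace.1 hs.isCompact
  have : @T2Space s (Preorder.topology s) :=
    let _ := Preorder.topology s
    have : OrderTopology s := ⟨rfl⟩
    inferInstance
  exact ⟨TopologicalSpace.eq_of_le_of_compactSpace (induced_topology_le_preorder Iff.rfl)⟩

section

variable {X : Type*} [LinearOrder X]

def principalCut (x : X) : LowerSet (X ×ₗ Bool) := LowerSet.Iic (toLex (x, false))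

lemma principalCut_strictMono : StrictMono (principalCut : X → LowerSet (X ×ₗ Bool)) :=
  fun _ _ h => LowerSet.Iic_strictMono _ (Prod.Lex.toLex_lt_toLex.2 (Or.inl h))

lemma isOpen_singleton_principalCut (x : X) : IsOpen {principalCut x} :=
  LowerSet.isOpen_singleton_Iic_of_covBy
    (Prod.Lex.toLex_covBy_toLex_iff.2 (Or.inl ⟨rfl, bot_covBy_top⟩) :
      toLex (x, false) ⋖ toLex (x, true))

lemma smul_principalCut {G : Type*} [Group G] [MulAction G X]
    [CovariantClass G X HSMul.hSMul LE.le] (g : G) (x : X) :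
    g • principalCut x = principalCut (g • x) :=
  LowerSet.smul_Iic g _

variable (X) in
abbrev CutCompactification : Type _ := closure (range (principalCut : X → LowerSet (X ×ₗ Bool)))

namespace CutCompactification

def of (x : X) : CutCompactification X := ⟨principalCut x, subset_closure (mem_range_self x)⟩

instance : CompactSpace (CutCompactification X) :=
  isCompact_iff_compactSpace.1 isClosed_closure.isCompact

instance : OrderTopology (CutCompactification X) := isClosed_closure.orderTopology

lemma of_strictMono : StrictMono (of : X → CutCompactification X) :=
  principalCut_strictMono

lemma denseRange_of : DenseRange (of : X → CutCompactification X) := by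
  rw [DenseRange, Subtype.dense_iff, ← range_comp]
  exact subset_rfl

lemma discreteTopology_range_of : DiscreteTopology (range (of : X → CutCompactification X)) := by
  refine discreteTopology_subtype_iff'.2 ?_
  rintro _ ⟨x, rfl⟩
  refine ⟨{of x}, ?_, inter_eq_left.2 (singleton_subset_iff.2 (mem_range_self x))⟩
  have : ({of x} : Set (CutCompactification X)) = Subtype.val ⁻¹' {principalCut x} :=
    ext fun _ => Subtype.ext_iff
  exact this ▸ (isOpen_singleton_principalCut x).preimage continuous_subtype_val

instance [Countable X] : TopologicalSpace.MetrizableSpace (CutCompactification X) :=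
  have : Countable (X ×ₗ Bool) := inferInstanceAs (Countable (X × Bool))
  (LowerSet.isClosedEmbedding_decide_mem.isEmbedding.comp IsEmbedding.subtypeVal).metrizableSpace

variable {G : Type*} [Group G] [MulAction G X] [CovariantClass G X HSMul.hSMul LE.le]

lemma smul_closure_range_principalCut (g : G) :
    g • closure (range (principalCut : X → LowerSet (X ×ₗ Bool))) =
      closure (range (principalCut : X → LowerSet (X ×ₗ Bool))) := by
  rw [← closure_smul, smul_set_range]
  simp_rw [smul_principalCut]
  exact congrArg closure ((MulAction.surjective g).range_comp principalCut)

instance : MulAction G (CutCompactification X) where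
  smul g y := ⟨g • (y : LowerSet (X ×ₗ Bool)),
    (smul_closure_range_principalCut g).subset (smul_mem_smul_set y.2)⟩
  one_smul _ := Subtype.ext (one_smul G _)
  mul_smul g h _ := Subtype.ext (mul_smul g h _)

instance : CovariantClass G (CutCompactification X) HSMul.hSMul LE.le :=
  ⟨fun g _ _ h => smul_mono_right (α := LowerSet (X ×ₗ Bool)) g h⟩

lemma of_smul (g : G) (x : X) : of (g • x) = g • of x :=
  Subtype.ext (smul_principalCut g x).symm

lemma smul_le_smul_of_forall_smul_le {g h : G} (hgh : ∀ x : X, g • x ≤ h • x)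
    (y : CutCompactification X) : g • y ≤ h • y :=
  LowerSet.smul_le_smul_of_forall_smul_le (Prod.Lex.smul_le_smul_of_forall_smul_le hgh) _

lemma continuous_smul [TopologicalSpace G] (hG : ∀ a b : X, IsOpen {g : G | g • a = b}) :
    Continuous fun p : G × CutCompactification X => p.1 • p.2 :=
  ((LowerSet.continuous_smul_of_isOpen_setOf_smul_eq (Prod.Lex.isOpen_setOf_smul_eq hG)).comp
    (continuous_fst.prodMk (continuous_subtype_val.comp continuous_snd))).subtype_mk _

end CutCompactification

end

theorem linear_inverse_limit_compactification_general
    {X : Type u} [LinearOrder X] {G : Type v} [Group G] [MulAction G X]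
    (hmono : ∀ (g : G) (x y : X), x ≤ y → g • x ≤ g • y) :
    ∃ (Y : Type u) (loY : LinearOrder Y) (tY : TopologicalSpace Y)
      (act : G →* Equiv.Perm Y) (ν : X → Y),
      letI := loY
      letI := tY
      letI : TopologicalSpace G :=
        TopologicalSpace.induced (fun (g : G) (x : X) => g • x)
          (@Pi.topologicalSpace X (fun _ => X) (fun _ => ⊥))
      OrderTopology Y ∧ CompactSpace Y ∧ T2Space Y ∧ TotallyDisconnectedSpace Y ∧
      (∀ g : G, Monotone (act g)) ∧
      (∀ g : G, Continuous (act g)) ∧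
      Continuous (fun p : G × Y => act p.1 p.2) ∧
      Function.Injective ν ∧
      (∀ (g : G) (x : X), ν (g • x) = act g (ν x)) ∧
      (∀ x y : X, x ≤ y → ν x ≤ ν y) ∧
      Dense (Set.range ν) ∧
      DiscreteTopology (Set.range ν) ∧
      (∀ loG : LinearOrder G,
        (∀ (x : X) (g h : G), loG.le g h → g • x ≤ h • x) →
          ∀ (a : Y) (g h : G), loG.le g h → act g a ≤ act h a) ∧
      (Countable X → TopologicalSpace.MetrizableSpace Y) := by
  have : CovariantClass G X HSMul.hSMul LE.le := ⟨hmono⟩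
  refine ⟨CutCompactification X, inferInstance, inferInstance, MulAction.toPermHom G _,
    CutCompactification.of, ?_⟩
  let _ : TopologicalSpace X := ⊥
  have : DiscreteTopology X := ⟨rfl⟩
  let _ : TopologicalSpace G :=
    TopologicalSpace.induced (fun (g : G) (x : X) => g • x) inferInstance
  have hG : ∀ a b : X, IsOpen {g : G | g • a = b} := fun a b =>
    isOpen_induced ((continuous_apply a : Continuous fun f : X → X => f a).isOpen_preimage {b}
      (isOpen_discrete _))
  have hjoint := CutCompactification.continuous_smul hG
  exact ⟨inferInstance, inferInstance, inferInstance, inferInstance, smul_mono_right,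
    fun g => hjoint.comp (continuous_const.prodMk continuous_id),
    hjoint, CutCompactification.of_strictMono.injective, CutCompactification.of_smul,
    fun _ _ h => CutCompactification.of_strictMono.monotone h, CutCompactification.denseRange_of,
    CutCompactification.discreteTopology_range_of,
    fun _ horb a g h hgh => CutCompactification.smul_le_smul_of_forall_smul_le (horb · g h hgh) a,
    fun _ => inferInstance⟩

/-- Every effective order-preserving action of a group `G` on a linearly
ordered set `X` extends to an action by order-preserving homeomorphisms on a compact Hausdorff
totally disconnected linearly ordered space `X∞` (carrying its order topology), jointly
continuous for the pointwise topology on `G` w.r.t. the discrete set `X`, together with a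
`G`-equivariant injective order-preserving map `ν : X → X∞` with dense, discrete image.
Moreover: (i) any linear order on `G` making all orbit maps `g ↦ g • x` (`x ∈ X`) monotone
makes all orbit maps `g ↦ g • a` (`a ∈ X∞`) monotone; (ii) if `X` is countable then `X∞` is
metrizable. -/
theorem linear_inverse_limit_compactification
    {X : Type u} [LinearOrder X] {G : Type v} [Group G] [MulAction G X]
    (heff : ∀ g : G, (∀ x : X, g • x = x) → g = 1)
    (hmono : ∀ (g : G) (x y : X), x ≤ y → g • x ≤ g • y) :
    ∃ (Y : Type u) (loY : LinearOrder Y) (tY : TopologicalSpace Y)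
      (act : G →* Equiv.Perm Y) (ν : X → Y),
      letI := loY
      letI := tY
      letI : TopologicalSpace G :=
        TopologicalSpace.induced (fun (g : G) (x : X) => g • x)
          (@Pi.topologicalSpace X (fun _ => X) (fun _ => ⊥))
      OrderTopology Y ∧ CompactSpace Y ∧ T2Space Y ∧ TotallyDisconnectedSpace Y ∧
      (∀ g : G, Monotone (act g)) ∧
      (∀ g : G, Continuous (act g)) ∧
      Continuous (fun p : G × Y => act p.1 p.2) ∧
      Function.Injective ν ∧
      (∀ (g : G) (x : X), ν (g • x) = act g (ν x)) ∧
      (∀ x y : X, x ≤ y → ν x ≤ ν y) ∧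
      Dense (Set.range ν) ∧
      DiscreteTopology (Set.range ν) ∧
      (∀ loG : LinearOrder G,
        (∀ (x : X) (g h : G), loG.le g h → g • x ≤ h • x) →
          ∀ (a : Y) (g h : G), loG.le g h → act g a ≤ act h a) ∧
      (Countable X → TopologicalSpace.MetrizableSpace Y) :=
  linear_inverse_limit_compactification_general hmono
end

section
/- Let K be a compact Hausdorff topological space equipped with a linear order whose order (interval) topology coincides with the topology of K, and let G be a topological group acting continuously and effectively on K such that every g ∈ G acts as an order automorphism of K. If g ∈ G satisfies 1 ∈ closure {gⁿ : n ∈ ℕ, n ≥ 1}, then g = 1. In other words, the neutral element is the only weakly topologically torsion element of G. -/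
/-! If `g • x < x`, monotonicity of the action makes the forward orbit `gⁿ • x` (`n ≥ 1`)
non-increasing, so it stays in the closed set `Iic (g • x)`, which does not contain `x`; by
continuity of the orbit map, `1 ∈ closure {gⁿ}` would force `x` into the closure of that orbit.
The case `x < g • x` is dual, so `g` fixes every point and effectiveness gives `g = 1`. -/

open Set

section MonotoneAction

variable {G K : Type*} [Monoid G] [MulAction G K] {g : G} {x : K}

lemma pow_smul_le_smul_of_smul_le [Preorder K] (hmono : Monotone (g • · : K → K))
    (hx : g • x ≤ x) {n : ℕ} (hn : 1 ≤ n) : g ^ n • x ≤ g • x := by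
  have := hmono.antitone_iterate_of_map_le hx hn
  simpa only [smul_iterate, pow_one] using this

lemma smul_le_pow_smul_of_le_smul [Preorder K] (hmono : Monotone (g • · : K → K))
    (hx : x ≤ g • x) {n : ℕ} (hn : 1 ≤ n) : g • x ≤ g ^ n • x := by
  have := hmono.monotone_iterate_of_le_map hx hn
  simpa only [smul_iterate, pow_one] using this

lemma smul_eq_of_mem_closure_pow_smul [LinearOrder K] [TopologicalSpace K]
    [OrderClosedTopology K] (hmono : Monotone (g • · : K → K))
    (hx : x ∈ closure {y | ∃ n : ℕ, 1 ≤ n ∧ y = g ^ n • x}) : g • x = x := by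
  rcases lt_trichotomy (g • x) x with hlt | heq | hgt
  · have horbit : {y | ∃ n : ℕ, 1 ≤ n ∧ y = g ^ n • x} ⊆ Iic (g • x) := by
      rintro _ ⟨n, hn, rfl⟩
      exact pow_smul_le_smul_of_smul_le hmono hlt.le hn
    exact absurd (closure_minimal horbit isClosed_Iic hx) hlt.not_ge
  · exact heq
  · have horbit : {y | ∃ n : ℕ, 1 ≤ n ∧ y = g ^ n • x} ⊆ Ici (g • x) := by
      rintro _ ⟨n, hn, rfl⟩
      exact smul_le_pow_smul_of_le_smul hmono hgt.le hn
    exact absurd (closure_minimal horbit isClosed_Ici hx) hgt.not_ge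

end MonotoneAction

theorem orderly_no_weakly_topologically_torsion_general
    {K : Type*} [TopologicalSpace K] [LinearOrder K] [OrderTopology K]
    {G : Type*} [Group G] [TopologicalSpace G] [MulAction G K]
    (hcont : Continuous (fun p : G × K => p.1 • p.2))
    (heff : ∀ g : G, (∀ x : K, g • x = x) → g = 1)
    (hmono : ∀ g : G, Monotone (fun x : K => g • x))
    (g : G) (hg : (1 : G) ∈ closure {h : G | ∃ n : ℕ, 1 ≤ n ∧ h = g ^ n}) :
    g = 1 := by
  refine heff g fun x => smul_eq_of_mem_closure_pow_smul (hmono g) ?_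
  have horbit : Continuous (· • x : G → K) := hcont.comp (continuous_id.prodMk continuous_const)
  have hmaps : MapsTo (· • x) {h : G | ∃ n : ℕ, 1 ≤ n ∧ h = g ^ n}
      {y | ∃ n : ℕ, 1 ≤ n ∧ y = g ^ n • x} := by
    rintro _ ⟨n, hn, rfl⟩
    exact ⟨n, hn, rfl⟩
  simpa only [one_smul] using map_mem_closure horbit hg hmaps

/-- Let a topological group `G` act continuously and effectively on a compact
Hausdorff space `K` with a linear order inducing its topology, each `g` acting as an order
automorphism. If `1 ∈ closure {gⁿ : n ≥ 1}` then `g = 1`: the identity is the only weakly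
topologically torsion element of `G`. -/
theorem orderly_no_weakly_topologically_torsion
    {K : Type*} [TopologicalSpace K] [LinearOrder K] [OrderTopology K]
    [CompactSpace K] [T2Space K]
    {G : Type*} [Group G] [TopologicalSpace G] [IsTopologicalGroup G] [MulAction G K]
    (hcont : Continuous (fun p : G × K => p.1 • p.2))
    (heff : ∀ g : G, (∀ x : K, g • x = x) → g = 1)
    (hmono : ∀ g : G, Monotone (fun x : K => g • x))
    (g : G) (hg : (1 : G) ∈ closure {h : G | ∃ n : ℕ, 1 ≤ n ∧ h = g ^ n}) :
    g = 1 :=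
  orderly_no_weakly_topologically_torsion_general hcont heff hmono g hg
end

section
/- Let G be a topological group acting continuously and effectively on a compact Hausdorff space K equipped with a linear order whose order topology coincides with the topology of K, such that every g ∈ G acts as an order automorphism of K. Then every compact subgroup of G is trivial (equal to {1}). -/
/-!
If `g` lies in a compact subgroup and moves some point up, `x < g • x`, then monotonicity makes
`n ↦ g ^ n • x` nondecreasing, so `g • x ≤ g ^ n • x` for all `n ≥ 1`. But compactness makes some
positive power `g ^ n` arbitrarily close to `1`, and by continuity of `h ↦ h • x` such a power
satisfies `g ^ n • x < g • x`. Hence every element of the subgroup moves every point down, and so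
does its inverse; so it fixes every point and is trivial by effectiveness.
-/

open Filter Topology

/-- For a cluster point `c` of the powers, `g ^ m / g ^ n = (g ^ m * c⁻¹) / (g ^ n * c⁻¹)` is
close to `1` whenever `g ^ m` and `g ^ n` are both close to `c`. -/
theorem IsCompact.exists_pos_pow_mem_of_mem_nhds_one {G : Type*} [Group G] [TopologicalSpace G]
    [IsTopologicalGroup G] {S : Set G} (hS : IsCompact S) {g : G} (hg : ∀ n : ℕ, g ^ n ∈ S)
    {U : Set G} (hU : U ∈ 𝓝 (1 : G)) : ∃ n : ℕ, 0 < n ∧ g ^ n ∈ U := by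
  obtain ⟨V, hV, hVU⟩ := exists_nhds_split_inv hU
  obtain ⟨c, -, hc⟩ := hS.exists_mapClusterPt (f := atTop) (u := (g ^ ·))
    (le_principal_iff.2 (mem_map.2 (univ_mem' hg)))
  have hc' : MapClusterPt (1 : G) atTop fun n : ℕ => g ^ n * c⁻¹ := by
    simpa [Function.comp_def] using hc.tendsto_comp ((continuous_mul_const c⁻¹).tendsto c)
  have hfreq := frequently_atTop.1 (mapClusterPt_iff_frequently.1 hc' V hV)
  obtain ⟨n, -, hn⟩ := hfreq 0
  obtain ⟨m, hnm, hm⟩ := hfreq (n + 1)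
  refine ⟨m - n, by omega, ?_⟩
  simpa [pow_sub g (by omega : n ≤ m), div_eq_mul_inv, mul_assoc] using hVU _ hm _ hn

theorem monotone_pow_smul {M α : Type*} [Monoid M] [MulAction M α] [Preorder α] {g : M} {x : α}
    (hmono : Monotone (g • · : α → α)) (hx : x ≤ g • x) : Monotone fun n : ℕ => g ^ n • x := by
  simpa only [smul_iterate] using hmono.monotone_iterate_of_le_map hx

theorem smul_le_of_forall_pow_mem_isCompact {G K : Type*} [Group G] [TopologicalSpace G]
    [IsTopologicalGroup G] [MulAction G K] [TopologicalSpace K] [LinearOrder K]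
    [ClosedIciTopology K] {S : Set G} (hS : IsCompact S) {g : G} (hg : ∀ n : ℕ, g ^ n ∈ S)
    (hmono : Monotone (g • · : K → K)) {x : K} (hcont : Continuous fun h : G => h • x) :
    g • x ≤ x := by
  by_contra! hx
  have hU : {h : G | h • x < g • x} ∈ 𝓝 (1 : G) :=
    (isOpen_Iio.preimage hcont).mem_nhds (by simpa using hx)
  obtain ⟨n, hn, hlt⟩ := hS.exists_pos_pow_mem_of_mem_nhds_one hg hU
  have hle : g ^ 1 • x ≤ g ^ n • x := monotone_pow_smul hmono hx.le hn
  exact (pow_one g ▸ hle).not_gt hlt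

theorem orderly_compact_subgroups_trivial_general
    {K : Type*} [TopologicalSpace K] [LinearOrder K] [OrderTopology K]
    {G : Type*} [Group G] [TopologicalSpace G] [IsTopologicalGroup G] [MulAction G K]
    (hcont : Continuous (fun p : G × K => p.1 • p.2))
    (heff : ∀ g : G, (∀ x : K, g • x = x) → g = 1)
    (hmono : ∀ g : G, Monotone (fun x : K => g • x))
    (H : Subgroup G) (hH : IsCompact (H : Set G)) :
    H = ⊥ := by
  have hcont_orbit (x : K) : Continuous fun h : G => h • x :=
    hcont.comp (continuous_id.prodMk continuous_const)
  have hdown {g : G} (hg : g ∈ H) (x : K) : g • x ≤ x :=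
    smul_le_of_forall_pow_mem_isCompact hH (fun n => pow_mem hg n) (hmono g) (hcont_orbit x)
  refine (Subgroup.eq_bot_iff_forall H).2 fun g hg => heff g fun x => ?_
  have hup : x ≤ g • x := by simpa using hmono g (hdown (inv_mem hg) x)
  exact le_antisymm (hdown hg x) hup

/-- Let a topological group `G` act continuously and effectively on a compact
Hausdorff space `K` with a linear order inducing its topology, every `g` acting as an order
automorphism. Then every compact subgroup of `G` is trivial. -/
theorem orderly_compact_subgroups_trivial
    {K : Type*} [TopologicalSpace K] [LinearOrder K] [OrderTopology K]
    [CompactSpace K] [T2Space K]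
    {G : Type*} [Group G] [TopologicalSpace G] [IsTopologicalGroup G] [MulAction G K]
    (hcont : Continuous (fun p : G × K => p.1 • p.2))
    (heff : ∀ g : G, (∀ x : K, g • x = x) → g = 1)
    (hmono : ∀ g : G, Monotone (fun x : K => g • x))
    (H : Subgroup G) (hH : IsCompact (H : Set G)) :
    H = ⊥ :=
  orderly_compact_subgroups_trivial_general hcont heff hmono H hH
end

section
/- Let G₁ and G₂ be topological groups. Suppose that for i = 1, 2 there is a compact Hausdorff space Kᵢ with a linear order whose order topology coincides with its topology, together with a continuous effective action of Gᵢ on Kᵢ by order automorphisms such that the induced map Gᵢ → C(Kᵢ,Kᵢ) (with the compact-open topology) is a topological embedding. Then there exists a compact Hausdorff space K with a linear order whose order topology coincides with its topology, together with a continuous effective action of G₁ × G₂ on K by order automorphisms, such that the induced map G₁ × G₂ → C(K,K) is a topological embedding. (One may take K to be the disjoint union K₁ ⊔ K₂ with the ordered-sum linear order placing all of K₁ below K₂, with (g₁,g₂) acting by g₁ on K₁ and by g₂ on K₂.) -/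
/-
The group `G₁ × G₂` acts summandwise on the ordered sum `K₁ ⊕ₗ K₂` (all of `K₁` below `K₂`),
given the disjoint-union topology. That topology is compact and finer than the order topology,
which is Hausdorff, so the two coincide. Restricting to the summands shows that
`(f, g) ↦ Sum.map f g` embeds `C(K₁, K₁) × C(K₂, K₂)` into `C(K₁ ⊕ K₂, K₁ ⊕ K₂)`, and the map
`G₁ × G₂ → C(K, K)` is this embedding composed with `j₁ × j₂`.
-/

open Set Topology

universe u₁ u₂

theorem TopologicalSpace.eq_of_le_of_compactSpace_of_t2Space {X : Type*}
    {t t' : TopologicalSpace X} [@CompactSpace X t] [@T2Space X t'] (h : t ≤ t') : t = t' := by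
  have hid := @Continuous.isClosedEmbedding X X t t' ‹_› ‹_› id (continuous_id_of_le h)
      Function.injective_id
  simpa only [induced_id] using @IsInducing.eq_induced X X t t' id
    (@IsEmbedding.toIsInducing X X t t' id (@IsClosedEmbedding.toIsEmbedding X X t t' id hid))

namespace ContinuousMap

variable {X₁ X₂ Y₁ Y₂ : Type*} [TopologicalSpace X₁] [TopologicalSpace X₂]
  [TopologicalSpace Y₁] [TopologicalSpace Y₂]

def sumMap (f : C(X₁, Y₁)) (g : C(X₂, Y₂)) : C(X₁ ⊕ X₂, Y₁ ⊕ Y₂) :=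
  ⟨Sum.map f g, f.continuous.sumMap g.continuous⟩

@[simp]
theorem sumMap_apply (f : C(X₁, Y₁)) (g : C(X₂, Y₂)) (p : X₁ ⊕ X₂) :
    sumMap f g p = Sum.map f g p :=
  rfl

theorem continuous_sumMap :
    Continuous (fun fg : C(X₁, Y₁) × C(X₂, Y₂) => sumMap fg.1 fg.2) := by
  refine continuous_compactOpen.2 fun K hK U hU => ?_
  have hsplit : {fg : C(X₁, Y₁) × C(X₂, Y₂) | MapsTo (sumMap fg.1 fg.2) K U} =
      {fg | MapsTo fg.1 (Sum.inl ⁻¹' K) (Sum.inl ⁻¹' U)} ∩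
        {fg | MapsTo fg.2 (Sum.inr ⁻¹' K) (Sum.inr ⁻¹' U)} := by
    ext fg
    simp [MapsTo, Sum.forall]
  rw [hsplit]
  exact ((isOpen_setOfPred_mapsTo (IsClosedEmbedding.inl.isCompact_preimage hK)
      (hU.preimage continuous_inl)).preimage continuous_fst).inter
    ((isOpen_setOfPred_mapsTo (IsClosedEmbedding.inr.isCompact_preimage hK)
      (hU.preimage continuous_inr)).preimage continuous_snd)

theorem isEmbedding_sumMap :
    IsEmbedding (fun fg : C(X₁, Y₁) × C(X₂, Y₂) => sumMap fg.1 fg.2) := by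
  have hrestrict : Continuous fun F : C(X₁ ⊕ X₂, Y₁ ⊕ Y₂) =>
      (F.comp ⟨Sum.inl, continuous_inl⟩, F.comp ⟨Sum.inr, continuous_inr⟩) :=
    (continuous_precomp _).prodMk (continuous_precomp _)
  have hpostcomp : IsEmbedding fun fg : C(X₁, Y₁) × C(X₂, Y₂) =>
      ((⟨Sum.inl, continuous_inl⟩ : C(Y₁, Y₁ ⊕ Y₂)).comp fg.1,
        (⟨Sum.inr, continuous_inr⟩ : C(Y₂, Y₁ ⊕ Y₂)).comp fg.2) :=
    (isEmbedding_postcomp _ .inl).prodMap (isEmbedding_postcomp _ .inr)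
  exact .of_comp continuous_sumMap hrestrict hpostcomp

end ContinuousMap

namespace Sum.Lex

variable {α β : Type*}

instance instTopologicalSpace [TopologicalSpace α] [TopologicalSpace β] :
    TopologicalSpace (α ⊕ₗ β) :=
  instTopologicalSpaceSum

instance [TopologicalSpace α] [TopologicalSpace β] [CompactSpace α] [CompactSpace β] :
    CompactSpace (α ⊕ₗ β) :=
  inferInstanceAs (CompactSpace (α ⊕ β))

theorem isOpen_iff [TopologicalSpace α] [TopologicalSpace β] {s : Set (α ⊕ₗ β)} :
    IsOpen s ↔ IsOpen {x | toLex (inl x) ∈ s} ∧ IsOpen {y | toLex (inr y) ∈ s} :=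
  isOpen_sum_iff

section OrderTopology

variable [TopologicalSpace α] [LinearOrder α] [OrderTopology α]
  [TopologicalSpace β] [LinearOrder β] [OrderTopology β]

theorem isOpen_Ioi (a : α ⊕ₗ β) : IsOpen (Ioi a) := by
  obtain ⟨x | y, rfl⟩ := toLex.surjective a <;>
    simp [isOpen_iff, isOpen_lt']

theorem isOpen_Iio (a : α ⊕ₗ β) : IsOpen (Iio a) := by
  obtain ⟨x | y, rfl⟩ := toLex.surjective a <;>
    simp [isOpen_iff, isOpen_gt']

variable [CompactSpace α] [CompactSpace β]

instance orderTopology : OrderTopology (α ⊕ₗ β) := by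
  have : @OrderTopology _ (Preorder.topology (α ⊕ₗ β)) _ :=
    @OrderTopology.mk _ (Preorder.topology _) _ rfl
  have : @T2Space _ (Preorder.topology (α ⊕ₗ β)) :=
    @OrderClosedTopology.to_t2Space _ (Preorder.topology _) _
      (@OrderTopology.to_orderClosedTopology _ (Preorder.topology _) _ this)
  refine ⟨TopologicalSpace.eq_of_le_of_compactSpace_of_t2Space
    (t' := Preorder.topology _) (le_generateFrom ?_)⟩
  rintro s ⟨a, rfl | rfl⟩
  exacts [isOpen_Ioi a, isOpen_Iio a]

end OrderTopology

section Action

variable {M N : Type*} [Monoid M] [Monoid N] [MulAction M α] [MulAction N β]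

abbrev prodMulAction : MulAction (M × N) (α ⊕ₗ β) where
  smul g p := toLex (Sum.map (g.1 • ·) (g.2 • ·) (ofLex p))
  one_smul p := by
    obtain ⟨x | y, rfl⟩ := toLex.surjective p <;> exact congrArg (toLex ∘ _) (one_smul _ _)
  mul_smul g h p := by
    obtain ⟨x | y, rfl⟩ := toLex.surjective p <;> exact congrArg (toLex ∘ _) (mul_smul _ _ _)

attribute [local instance] prodMulAction

@[simp]
theorem smul_toLex_inl (g : M × N) (x : α) : g • toLex (inl x : α ⊕ β) = toLex (inl (g.1 • x)) :=
  rfl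

@[simp]
theorem smul_toLex_inr (g : M × N) (y : β) : g • toLex (inr y : α ⊕ β) = toLex (inr (g.2 • y)) :=
  rfl

theorem monotone_smul [Preorder α] [Preorder β] (h₁ : ∀ m : M, Monotone (m • · : α → α))
    (h₂ : ∀ n : N, Monotone (n • · : β → β)) (g : M × N) :
    Monotone (g • · : α ⊕ₗ β → α ⊕ₗ β) := by
  rintro p q hpq
  obtain ⟨x | y, rfl⟩ := toLex.surjective p <;> obtain ⟨x' | y', rfl⟩ := toLex.surjective q
  · simpa using h₁ g.1 (inl_le_inl_iff.1 hpq)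
  · exact inl_le_inr _ _
  · exact absurd hpq not_inr_le_inl
  · simpa using h₂ g.2 (inr_le_inr_iff.1 hpq)

theorem eq_one_of_forall_smul_eq (h₁ : ∀ m : M, (∀ x : α, m • x = x) → m = 1)
    (h₂ : ∀ n : N, (∀ y : β, n • y = y) → n = 1) (g : M × N)
    (hg : ∀ p : α ⊕ₗ β, g • p = p) : g = 1 :=
  Prod.ext (h₁ g.1 fun x => by simpa using hg (toLex (inl x)))
    (h₂ g.2 fun y => by simpa using hg (toLex (inr y)))

theorem continuousSMul [TopologicalSpace M] [TopologicalSpace N] [TopologicalSpace α]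
    [TopologicalSpace β] [ContinuousSMul M α] [ContinuousSMul N β] :
    ContinuousSMul (M × N) (α ⊕ₗ β) := by
  have hsplit : (fun p : (M × N) × (α ⊕ₗ β) => p.1 • p.2) =
      Sum.elim (fun q : (M × N) × α => toLex (inl (q.1.1 • q.2)))
        (fun q : (M × N) × β => toLex (inr (q.1.2 • q.2))) ∘ Homeomorph.prodSumDistrib := by
    ext ⟨g, x | y⟩ <;> rfl
  refine ⟨hsplit ▸ Continuous.comp ?_ (Homeomorph.continuous _)⟩
  exact (continuous_inl.comp (continuous_fst.fst.smul continuous_snd)).sumElim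
    (continuous_inr.comp (continuous_fst.snd.smul continuous_snd))

end Action

end Sum.Lex

theorem product_of_orderly_is_orderly_general
    {G₁ G₂ : Type*} [Group G₁] [Group G₂]
    [TopologicalSpace G₁] [TopologicalSpace G₂]
    {K₁ : Type u₁} {K₂ : Type u₂}
    [TopologicalSpace K₁] [LinearOrder K₁] [OrderTopology K₁] [CompactSpace K₁]
    [TopologicalSpace K₂] [LinearOrder K₂] [OrderTopology K₂] [CompactSpace K₂]
    [MulAction G₁ K₁] [MulAction G₂ K₂]
    (hcont₁ : Continuous (fun p : G₁ × K₁ => p.1 • p.2))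
    (hcont₂ : Continuous (fun p : G₂ × K₂ => p.1 • p.2))
    (heff₁ : ∀ g : G₁, (∀ x : K₁, g • x = x) → g = 1)
    (heff₂ : ∀ g : G₂, (∀ x : K₂, g • x = x) → g = 1)
    (hmono₁ : ∀ g : G₁, Monotone (fun x : K₁ => g • x))
    (hmono₂ : ∀ g : G₂, Monotone (fun x : K₂ => g • x))
    (j₁ : G₁ → C(K₁, K₁)) (hj₁ : ∀ (g : G₁) (x : K₁), j₁ g x = g • x)
    (hemb₁ : Topology.IsEmbedding j₁)
    (j₂ : G₂ → C(K₂, K₂)) (hj₂ : ∀ (g : G₂) (x : K₂), j₂ g x = g • x)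
    (hemb₂ : Topology.IsEmbedding j₂) :
    ∃ (K : Type (max u₁ u₂)) (tK : TopologicalSpace K) (loK : LinearOrder K)
      (act : MulAction (G₁ × G₂) K),
      letI := tK
      letI := loK
      letI := act
      CompactSpace K ∧ T2Space K ∧ OrderTopology K ∧
      Continuous (fun p : (G₁ × G₂) × K => p.1 • p.2) ∧
      (∀ g : G₁ × G₂, Monotone (fun x : K => g • x)) ∧
      (∀ g : G₁ × G₂, (∀ x : K, g • x = x) → g = 1) ∧
      ∃ j : (G₁ × G₂) → C(K, K),
        (∀ (g : G₁ × G₂) (x : K), j g x = g • x) ∧ Topology.IsEmbedding j := by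
  have : ContinuousSMul G₁ K₁ := ⟨hcont₁⟩
  have : ContinuousSMul G₂ K₂ := ⟨hcont₂⟩
  refine ⟨K₁ ⊕ₗ K₂, inferInstance, inferInstance, Sum.Lex.prodMulAction, inferInstance,
    inferInstance, inferInstance, Sum.Lex.continuousSMul.continuous_smul,
    Sum.Lex.monotone_smul hmono₁ hmono₂, Sum.Lex.eq_one_of_forall_smul_eq heff₁ heff₂,
    fun g => (j₁ g.1).sumMap (j₂ g.2), ?_,
    ContinuousMap.isEmbedding_sumMap.comp (hemb₁.prodMap hemb₂)⟩
  rintro g p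
  obtain ⟨x | y, rfl⟩ := toLex.surjective p
  · exact congrArg (toLex ∘ Sum.inl) (hj₁ g.1 x)
  · exact congrArg (toLex ∘ Sum.inr) (hj₂ g.2 y)

/-- If topological groups `G₁` and `G₂` each admit a continuous effective
order-preserving action on a compact linearly ordered space for which the induced map into
`C(Kᵢ,Kᵢ)` (compact-open topology) is a topological embedding, then so does `G₁ × G₂`. -/
theorem product_of_orderly_is_orderly
    {G₁ G₂ : Type*} [Group G₁] [Group G₂]
    [TopologicalSpace G₁] [TopologicalSpace G₂] [IsTopologicalGroup G₁] [IsTopologicalGroup G₂]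
    {K₁ : Type u₁} {K₂ : Type u₂}
    [TopologicalSpace K₁] [LinearOrder K₁] [OrderTopology K₁] [CompactSpace K₁] [T2Space K₁]
    [TopologicalSpace K₂] [LinearOrder K₂] [OrderTopology K₂] [CompactSpace K₂] [T2Space K₂]
    [MulAction G₁ K₁] [MulAction G₂ K₂]
    (hcont₁ : Continuous (fun p : G₁ × K₁ => p.1 • p.2))
    (hcont₂ : Continuous (fun p : G₂ × K₂ => p.1 • p.2))
    (heff₁ : ∀ g : G₁, (∀ x : K₁, g • x = x) → g = 1)
    (heff₂ : ∀ g : G₂, (∀ x : K₂, g • x = x) → g = 1)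
    (hmono₁ : ∀ g : G₁, Monotone (fun x : K₁ => g • x))
    (hmono₂ : ∀ g : G₂, Monotone (fun x : K₂ => g • x))
    (j₁ : G₁ → C(K₁, K₁)) (hj₁ : ∀ (g : G₁) (x : K₁), j₁ g x = g • x)
    (hemb₁ : Topology.IsEmbedding j₁)
    (j₂ : G₂ → C(K₂, K₂)) (hj₂ : ∀ (g : G₂) (x : K₂), j₂ g x = g • x)
    (hemb₂ : Topology.IsEmbedding j₂) :
    ∃ (K : Type (max u₁ u₂)) (tK : TopologicalSpace K) (loK : LinearOrder K)
      (act : MulAction (G₁ × G₂) K),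
      letI := tK
      letI := loK
      letI := act
      CompactSpace K ∧ T2Space K ∧ OrderTopology K ∧
      Continuous (fun p : (G₁ × G₂) × K => p.1 • p.2) ∧
      (∀ g : G₁ × G₂, Monotone (fun x : K => g • x)) ∧
      (∀ g : G₁ × G₂, (∀ x : K, g • x = x) → g = 1) ∧
      ∃ j : (G₁ × G₂) → C(K, K),
        (∀ (g : G₁ × G₂) (x : K), j g x = g • x) ∧ Topology.IsEmbedding j :=
  product_of_orderly_is_orderly_general hcont₁ hcont₂ heff₁ heff₂ hmono₁ hmono₂ j₁ hj₁ hemb₁ j₂ hj₂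
    hemb₂
end

section
/- Let ≤_G be a linear order on a group G, let K be a compact Hausdorff space with a linear order ≤ whose order topology coincides with its topology, and let G act effectively on K by order automorphisms such that the action is strongly monotone: for every x ∈ K the orbit map g ↦ g•x from (G, ≤_G) to (K, ≤) is monotone. Let E(K) be the closure in the product space K^K (pointwise topology) of the set of translations {x ↦ g•x | g ∈ G}, and define p ⪯ q iff p(a) ≤ q(a) for every a ∈ K. Then: (i) ⪯ is a linear order on E(K), i.e., any two elements of E(K) are ⪯-comparable; (ii) ⪯ is bi-invariant under composition: for s₁, s₂, p ∈ E(K) with s₁ ⪯ s₂, both s₁ ∘ p ⪯ s₂ ∘ p and p ∘ s₁ ⪯ p ∘ s₂; (iii) the map j : G → E(K), j(g) = (x ↦ g•x), is injective and an order embedding: g₁ ≤_G g₂ if and only if j(g₁) ⪯ j(g₂). -/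
/-!
The translations `g • ·` form a chain in the pointwise order on `K → K`, since the orbit maps
are monotone in `g` and `≤_G` is total. In an order-closed space the relation "comparable" is
closed, so the closure `E(K)` of this chain is again a chain. Its elements are pointwise limits
of monotone maps, hence monotone, which gives left invariance; right invariance is just
evaluation at `p a`. Faithfulness makes `g ↦ (g • ·)` injective, and a monotone injection out
of a linear order reflects the order.
-/

theorem IsChain.closure {α : Type*} [TopologicalSpace α] [Preorder α] [OrderClosedTopology α]
    {s : Set α} (hs : IsChain (· ≤ ·) s) : IsChain (· ≤ ·) (closure s) := by
  have hclosed : IsClosed {p : α × α | p.1 ≤ p.2 ∨ p.2 ≤ p.1} :=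
    (isClosed_le continuous_fst continuous_snd).union
      (isClosed_le continuous_snd continuous_fst)
  intro x hx y hy _
  have hxy : (x, y) ∈ _root_.closure (s ×ˢ s) := by
    rw [closure_prod_eq]
    exact ⟨hx, hy⟩
  exact closure_minimal (fun p hp => hs.total hp.1 hp.2) hclosed hxy

theorem FaithfulSMul.of_forall_smul_eq_self_imp_eq_one {G α : Type*} [Group G] [MulAction G α]
    (h : ∀ g : G, (∀ x : α, g • x = x) → g = 1) : FaithfulSMul G α :=
  ⟨fun {g₁ _} hg => inv_mul_eq_one.mp (h _ fun x => by rw [mul_smul, ← hg, inv_smul_smul])⟩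

theorem enveloping_semigroup_linearly_ordered_general
    {K : Type*} [TopologicalSpace K] [LinearOrder K] [OrderTopology K]
    {G : Type*} [Group G] [MulAction G K]
    (heff : ∀ g : G, (∀ x : K, g • x = x) → g = 1)
    (hmono : ∀ g : G, Monotone (fun x : K => g • x))
    (leG : LinearOrder G)
    (hstrong : ∀ g h : G, leG.le g h → ∀ x : K, g • x ≤ h • x) :
    ∀ E : Set (K → K), E = closure {f : K → K | ∃ g : G, f = fun x => g • x} →
      (∀ p ∈ E, ∀ q ∈ E, (∀ a : K, p a ≤ q a) ∨ (∀ a : K, q a ≤ p a)) ∧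
      (∀ s₁ ∈ E, ∀ s₂ ∈ E, ∀ p ∈ E, (∀ a : K, s₁ a ≤ s₂ a) →
        ((∀ a : K, (s₁ ∘ p) a ≤ (s₂ ∘ p) a) ∧ (∀ a : K, (p ∘ s₁) a ≤ (p ∘ s₂) a))) ∧
      (Function.Injective (fun g : G => (fun x : K => g • x)) ∧
        ∀ g₁ g₂ : G, leG.le g₁ g₂ ↔ ∀ a : K, g₁ • a ≤ g₂ • a) := by
  let _ := leG
  have := FaithfulSMul.of_forall_smul_eq_self_imp_eq_one heff
  set j : G → K → K := fun g x => g • x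
  have hj_mono : Monotone j := hstrong
  have hj_inj : Function.Injective j := smul_left_injective'
  rintro E rfl
  have htranslations : {f : K → K | ∃ g : G, f = j g} = Set.range j :=
    Set.ext fun _ => exists_congr fun _ => eq_comm
  rw [htranslations]
  have hE_monotone : closure (Set.range j) ⊆ {f | Monotone f} :=
    closure_minimal (Set.range_subset_iff.mpr hmono) isClosed_monotone
  refine ⟨fun p hp q hq => hj_mono.isChain_range.closure.total hp hq,
    fun s₁ _ s₂ _ p hp hle => ⟨fun a => hle (p a), fun a => hE_monotone hp (hle a)⟩,
    hj_inj, fun g₁ g₂ => (hj_mono.strictMono_of_injective hj_inj).le_iff_le.symm⟩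

/-- Let a group `G` with a linear order `≤_G` act effectively by order
automorphisms on a compact linearly ordered space `K`, strongly monotonically (all orbit maps
are monotone). Let `E(K)` be the closure in `K^K` (pointwise topology) of the set of
translations, ordered pointwise. Then: (i) the pointwise order is total on `E(K)`; (ii) it is
bi-invariant under composition; (iii) `j : G → E(K)`, `j g = (x ↦ g • x)`, is injective and an
order embedding. -/
theorem enveloping_semigroup_linearly_ordered
    {K : Type*} [TopologicalSpace K] [LinearOrder K] [OrderTopology K]
    [CompactSpace K] [T2Space K]
    {G : Type*} [Group G] [MulAction G K]
    (heff : ∀ g : G, (∀ x : K, g • x = x) → g = 1)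
    (hmono : ∀ g : G, Monotone (fun x : K => g • x))
    (leG : LinearOrder G)
    (hstrong : ∀ g h : G, leG.le g h → ∀ x : K, g • x ≤ h • x) :
    ∀ E : Set (K → K), E = closure {f : K → K | ∃ g : G, f = fun x => g • x} →
      (∀ p ∈ E, ∀ q ∈ E, (∀ a : K, p a ≤ q a) ∨ (∀ a : K, q a ≤ p a)) ∧
      (∀ s₁ ∈ E, ∀ s₂ ∈ E, ∀ p ∈ E, (∀ a : K, s₁ a ≤ s₂ a) →
        ((∀ a : K, (s₁ ∘ p) a ≤ (s₂ ∘ p) a) ∧ (∀ a : K, (p ∘ s₁) a ≤ (p ∘ s₂) a))) ∧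
      (Function.Injective (fun g : G => (fun x : K => g • x)) ∧
        ∀ g₁ g₂ : G, leG.le g₁ g₂ ↔ ∀ a : K, g₁ • a ≤ g₂ • a) :=
  enveloping_semigroup_linearly_ordered_general heff hmono leG hstrong
end

section
/- For an abstract group G the following are equivalent: (a) G admits a bi-invariant linear order, i.e., a linear order ≤ on G such that x ≤ y implies g*x ≤ g*y and x*g ≤ y*g for all g; (b) there exist a compact Hausdorff space S with a linear order whose order topology coincides with its topology and a semigroup structure on S such that every right translation s ↦ s*t is continuous and the order is bi-invariant (x ≤ y implies x*s ≤ y*s and s*x ≤ s*y for all s), together with an injective semigroup homomorphism γ : G → S whose image is dense in S and is a discrete subspace of S, and such that left translation by γ(g) is continuous on S for every g ∈ G. -/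
/-!
A bi-invariant order on `G` is recovered from a compactification by pulling back the order of `S`
along `γ`. Conversely, for a bi-ordered group `G`, the compactification `S` consists of the points
of `G` together with, for each cut of `G`, its supremum from below and its infimum from above; at a
gap of `G` these are two distinct points. `S` is a complete linear order in which every point of
`G` has an immediate predecessor and successor, so `G` is dense and discrete in `S`. Left
translations by `G` extend to order automorphisms of `S`, and `x * y` is the supremum of `g • y`
over `g ≤ x` when `x` is approached from below, the infimum of `g • y` over `g > x` otherwise.
Monotonicity of this product gives continuity of right translations, and associativity extends
from the dense subset `G` to all of `S`.
-/

universe u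

open Set Filter Topology

namespace Prod.Lex

variable {α β : Type*} [CompleteLinearOrder α] [CompleteLinearOrder β]

noncomputable instance : SupSet (α ×ₗ β) where
  sSup s :=
    let a := sSup ((fun p => (ofLex p).1) '' s)
    toLex (a, sSup {b | toLex (a, b) ∈ s})

noncomputable instance : InfSet (α ×ₗ β) where
  sInf s :=
    let a := sInf ((fun p => (ofLex p).1) '' s)
    toLex (a, sInf {b | toLex (a, b) ∈ s})

theorem ofLex_sSup (s : Set (α ×ₗ β)) :
    ofLex (sSup s) = (sSup ((fun p => (ofLex p).1) '' s),
      sSup {b | toLex (sSup ((fun p => (ofLex p).1) '' s), b) ∈ s}) := rfl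

theorem ofLex_sInf (s : Set (α ×ₗ β)) :
    ofLex (sInf s) = (sInf ((fun p => (ofLex p).1) '' s),
      sInf {b | toLex (sInf ((fun p => (ofLex p).1) '' s), b) ∈ s}) := rfl

theorem isLUB_sSup (s : Set (α ×ₗ β)) : IsLUB s (sSup s) := by
  refine ⟨fun p hp => ?_, fun q hq => ?_⟩
  · simp only [le_iff, ofLex_sSup]
    refine (le_sSup (mem_image_of_mem _ hp)).lt_or_eq.imp id fun h => ⟨h, le_sSup ?_⟩
    show toLex (_, _) ∈ s
    rw [← h]
    exact hp
  · simp only [le_iff, ofLex_sSup]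
    have ha : sSup ((fun p => (ofLex p).1) '' s) ≤ (ofLex q).1 :=
      sSup_le (forall_mem_image.2 fun p hp => monotone_fst _ _ (hq hp))
    refine ha.lt_or_eq.imp id fun h => ⟨h, sSup_le fun b hb => ?_⟩
    exact ((le_iff.1 (hq hb)).resolve_left h.not_lt).2

theorem isGLB_sInf (s : Set (α ×ₗ β)) : IsGLB s (sInf s) := by
  refine ⟨fun p hp => ?_, fun q hq => ?_⟩
  · simp only [le_iff, ofLex_sInf]
    refine (sInf_le (mem_image_of_mem _ hp)).lt_or_eq.imp id fun h => ⟨h, sInf_le ?_⟩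
    show toLex (_, _) ∈ s
    rw [h]
    exact hp
  · simp only [le_iff, ofLex_sInf]
    have ha : (ofLex q).1 ≤ sInf ((fun p => (ofLex p).1) '' s) :=
      le_sInf (forall_mem_image.2 fun p hp => monotone_fst _ _ (hq hp))
    refine ha.lt_or_eq.imp id fun h => ⟨h, le_sInf fun b hb => ?_⟩
    exact ((le_iff.1 (hq hb)).resolve_left fun hlt => hlt.ne h).2

theorem sSup_mem_of_exists_fst_eq [Finite β] {s : Set (α ×ₗ β)}
    (h : ∃ p ∈ s, (ofLex p).1 = (ofLex (sSup s)).1) : sSup s ∈ s := by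
  obtain ⟨p, hp, hp1⟩ := h
  have hne : {b | toLex ((ofLex (sSup s)).1, b) ∈ s}.Nonempty :=
    ⟨(ofLex p).2, show toLex (_, _) ∈ s by rw [← hp1]; exact hp⟩
  exact Set.Nonempty.csSup_mem hne (Set.toFinite _)

theorem sInf_mem_of_exists_fst_eq [Finite β] {s : Set (α ×ₗ β)}
    (h : ∃ p ∈ s, (ofLex p).1 = (ofLex (sInf s)).1) : sInf s ∈ s := by
  obtain ⟨p, hp, hp1⟩ := h
  have hne : {b | toLex ((ofLex (sInf s)).1, b) ∈ s}.Nonempty :=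
    ⟨(ofLex p).2, show toLex (_, _) ∈ s by rw [← hp1]; exact hp⟩
  exact Set.Nonempty.csInf_mem hne (Set.toFinite _)

noncomputable instance : CompleteLinearOrder (α ×ₗ β) :=
  { Prod.Lex.instLinearOrder α β, LinearOrder.toBiheytingAlgebra (α ×ₗ β),
      (inferInstance : BoundedOrder (α ×ₗ β)) with
    isLUB_sSup := isLUB_sSup
    isGLB_sInf := isGLB_sInf }

end Prod.Lex

section

variable {α : Type*} [ConditionallyCompleteLinearOrder α] [TopologicalSpace α] [OrderTopology α]
  {x : α}

theorem Ici_mem_nhds_of_sSup_Iio_lt (h : (Iio x).Nonempty → sSup (Iio x) < x) :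
    Ici x ∈ 𝓝 x := by
  rcases (Iio x).eq_empty_or_nonempty with hx | hx
  · have hIci : Ici x = univ := eq_univ_of_forall fun y => not_lt.1 fun hy => hx.subset hy
    exact hIci ▸ univ_mem
  · have hIoi : Ioi (sSup (Iio x)) = Ici x := Set.ext fun y =>
      ⟨fun hy => not_lt.1 fun hyx => (le_csSup bddAbove_Iio hyx).not_gt hy, (h hx).trans_le⟩
    exact hIoi ▸ isOpen_Ioi.mem_nhds (h hx)

theorem Iic_mem_nhds_of_lt_sInf_Ioi (h : (Ioi x).Nonempty → x < sInf (Ioi x)) :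
    Iic x ∈ 𝓝 x :=
  Ici_mem_nhds_of_sSup_Iio_lt (α := αᵒᵈ) h

end

section

variable {α : Type*} [LinearOrder α]

theorem LowerSet.le_Iio_of_notMem {U : LowerSet α} {a : α} (ha : a ∉ U) :
    U ≤ LowerSet.Iio a :=
  fun _ hb => lt_of_not_ge fun hab => ha (U.lower hab hb)

end

namespace OrderCompactification

variable {α : Type*} [LinearOrder α]

/-- `(U, false)` stands for the supremum of the lower set `U`, `(U, true)` for the infimum of
its complement. The excluded pairs would be isolated endpoints or, for `(Iio a, true)`, a second
copy of `a`. -/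
def IsPoint : LowerSet α → Bool → Prop
  | U, false => U ≠ ⊥
  | U, true => U ≠ ⊤ ∧ ∀ a, U ≠ LowerSet.Iio a

variable (α) in
def points : Set (LowerSet α ×ₗ Bool) := {p | IsPoint (ofLex p).1 (ofLex p).2}

theorem sSup_mem_points {T : Set (LowerSet α ×ₗ Bool)} (hT : T.Nonempty) (h : T ⊆ points α) :
    sSup T ∈ points α := by
  by_cases hatt : ∃ p ∈ T, (ofLex p).1 = (ofLex (sSup T)).1
  · exact h (Prod.Lex.sSup_mem_of_exists_fst_eq hatt)
  -- Otherwise the supremum is `(⨆ U, false)`, and `⨆ U ≠ ⊥` as it is not attained.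
  simp only [not_exists, not_and] at hatt
  have hsnd : (ofLex (sSup T)).2 = false := by
    have hempty : {b | toLex ((ofLex (sSup T)).1, b) ∈ T} = ∅ :=
      eq_empty_of_forall_notMem fun b hb => hatt _ hb rfl
    show sSup {b | toLex ((ofLex (sSup T)).1, b) ∈ T} = false
    rw [hempty, sSup_empty]
    rfl
  show IsPoint _ _
  rw [hsnd]
  intro hbot
  obtain ⟨p, hp⟩ := hT
  refine hatt p hp (le_antisymm (Prod.Lex.monotone_fst _ _ (le_sSup hp)) ?_)
  rw [hbot]
  exact bot_le

theorem sInf_mem_points {T : Set (LowerSet α ×ₗ Bool)} (hT : T.Nonempty) (h : T ⊆ points α) :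
    sInf T ∈ points α := by
  by_cases hatt : ∃ p ∈ T, (ofLex p).1 = (ofLex (sInf T)).1
  · exact h (Prod.Lex.sInf_mem_of_exists_fst_eq hatt)
  -- Otherwise the infimum is `(⨅ U, true)`; were its complement to have a least element `a`,
  -- some `U` would avoid `a` and hence equal `Iio a`, attaining the infimum.
  simp only [not_exists, not_and] at hatt
  have hsnd : (ofLex (sInf T)).2 = true := by
    have hempty : {b | toLex ((ofLex (sInf T)).1, b) ∈ T} = ∅ :=
      eq_empty_of_forall_notMem fun b hb => hatt _ hb rfl
    show sInf {b | toLex ((ofLex (sInf T)).1, b) ∈ T} = true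
    rw [hempty, sInf_empty]
    rfl
  have hle : ∀ p ∈ T, (ofLex (sInf T)).1 ≤ (ofLex p).1 :=
    fun p hp => Prod.Lex.monotone_fst _ _ (sInf_le hp)
  show IsPoint _ _
  rw [hsnd]
  refine ⟨fun htop => ?_, fun a hA => ?_⟩
  · obtain ⟨p, hp⟩ := hT
    refine hatt p hp (le_antisymm ?_ (hle p hp))
    rw [htop]
    exact le_top
  · have : a ∉ (ofLex (sInf T)).1 := by simp [hA]
    rw [Prod.Lex.ofLex_sInf, LowerSet.mem_sInf_iff] at this
    simp only [not_forall, exists_prop] at this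
    obtain ⟨_, ⟨p, hp, rfl⟩, hap⟩ := this
    refine hatt p hp (le_antisymm ?_ (hle p hp))
    rw [hA]
    intro x hx
    exact lt_of_not_ge fun hax => hap ((ofLex p).1.lower hax hx)

end OrderCompactification

def OrderCompactification (α : Type*) [LinearOrder α] : Type _ := OrderCompactification.points α

namespace OrderCompactification

section Basic

variable {α : Type*} [LinearOrder α]

def cut (x : OrderCompactification α) : LowerSet α := (ofLex x.1).1

def upper (x : OrderCompactification α) : Bool := (ofLex x.1).2

theorem isPoint (x : OrderCompactification α) : IsPoint x.cut x.upper := x.2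

def mk (U : LowerSet α) (b : Bool) (h : IsPoint U b) : OrderCompactification α :=
  ⟨toLex (U, b), h⟩

theorem val_eq (x : OrderCompactification α) : x.1 = toLex (x.cut, x.upper) := rfl

@[ext] theorem ext {x y : OrderCompactification α} (hcut : x.cut = y.cut)
    (hupper : x.upper = y.upper) : x = y :=
  Subtype.ext (congrArg toLex (Prod.ext hcut hupper))

theorem cut_ne_bot {x : OrderCompactification α} (hx : x.upper = false) : x.cut ≠ ⊥ := by
  have := x.isPoint; rw [hx] at this; exact this

theorem cut_ne_top {x : OrderCompactification α} (hx : x.upper = true) : x.cut ≠ ⊤ := by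
  have := x.isPoint; rw [hx] at this; exact this.1

theorem cut_ne_Iio {x : OrderCompactification α} (hx : x.upper = true) (a : α) :
    x.cut ≠ LowerSet.Iio a := by
  have := x.isPoint; rw [hx] at this; exact this.2 a

theorem nonempty_cut {x : OrderCompactification α} (hx : x.upper = false) :
    (x.cut : Set α).Nonempty :=
  LowerSet.coe_nonempty.2 (cut_ne_bot hx)

theorem nonempty_compl_cut {x : OrderCompactification α} (hx : x.upper = true) :
    (x.cut : Set α)ᶜ.Nonempty :=
  nonempty_compl.2 (LowerSet.coe_eq_univ.not.2 (cut_ne_top hx))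

def of (a : α) : OrderCompactification α := mk (LowerSet.Iic a) false LowerSet.bot_lt_Iic.ne'

@[simp] theorem cut_of (a : α) : (of a).cut = LowerSet.Iic a := rfl

@[simp] theorem upper_of (a : α) : (of a).upper = false := rfl

end Basic

section Complete

variable {α : Type*} [LinearOrder α] [Nonempty α]

def top : OrderCompactification α :=
  mk ⊤ false ((LowerSet.bot_lt_Iic (a := Classical.arbitrary α)).trans_le le_top).ne'

noncomputable instance : ConditionallyCompleteLinearOrder (OrderCompactification α) :=
  letI : Inhabited (points α) := ⟨top⟩
  subsetConditionallyCompleteLinearOrder (points α)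
    (fun ht _ => sSup_mem_points (ht.image _) (image_subset_iff.2 fun x _ => x.2))
    (fun ht _ => sInf_mem_points (ht.image _) (image_subset_iff.2 fun x _ => x.2))

theorem le_iff {x y : OrderCompactification α} :
    x ≤ y ↔ x.cut < y.cut ∨ x.cut = y.cut ∧ x.upper ≤ y.upper := Prod.Lex.le_iff

theorem lt_iff {x y : OrderCompactification α} :
    x < y ↔ x.cut < y.cut ∨ x.cut = y.cut ∧ x.upper < y.upper := Prod.Lex.lt_iff

theorem cut_mono : Monotone (cut : OrderCompactification α → LowerSet α) :=
  fun x y h => Prod.Lex.monotone_fst x.1 y.1 h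

theorem le_of_cut_le {x y : OrderCompactification α} (hcut : x.cut ≤ y.cut)
    (hupper : x.upper = y.upper) : x ≤ y :=
  le_iff.2 (hcut.lt_or_eq.imp_right fun h => ⟨h, hupper.le⟩)

theorem of_le_iff {a : α} {x : OrderCompactification α} : of a ≤ x ↔ a ∈ x.cut := by
  simp only [le_iff, cut_of, upper_of, Bool.false_le, and_true, ← le_iff_lt_or_eq,
    LowerSet.Iic_le]

theorem lt_of_iff {a : α} {x : OrderCompactification α} : x < of a ↔ a ∉ x.cut := by
  rw [← not_le, of_le_iff]

theorem of_le_of {a b : α} : of a ≤ of b ↔ a ≤ b := of_le_iff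

theorem of_injective : Function.Injective (of : α → OrderCompactification α) :=
  fun _ _ h => le_antisymm (of_le_of.1 h.le) (of_le_of.1 h.ge)

noncomputable instance : BoundedOrder (OrderCompactification α) where
  top := top
  le_top x := by
    refine le_iff.2 ((le_top : x.cut ≤ ⊤).lt_or_eq.imp_right fun h => ⟨h, ?_⟩)
    cases hx : x.upper
    · exact le_rfl
    · exact absurd h (cut_ne_top hx)
  bot := ⟨sInf (points α), sInf_mem_points ⟨_, top.2⟩ subset_rfl⟩
  bot_le x := sInf_le x.2

theorem val_sSup {T : Set (OrderCompactification α)} (hT : T.Nonempty) :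
    (sSup T).1 = sSup (Subtype.val '' T) :=
  letI : Inhabited (points α) := ⟨top⟩
  (subset_sSup_of_within (points α) hT (OrderTop.bddAbove T)
    (sSup_mem_points (hT.image _) (image_subset_iff.2 fun x _ => x.2))).symm

theorem val_sInf {T : Set (OrderCompactification α)} (hT : T.Nonempty) :
    (sInf T).1 = sInf (Subtype.val '' T) :=
  letI : Inhabited (points α) := ⟨top⟩
  (subset_sInf_of_within (points α) hT (OrderBot.bddBelow T)
    (sInf_mem_points (hT.image _) (image_subset_iff.2 fun x _ => x.2))).symm

noncomputable instance : TopologicalSpace (OrderCompactification α) := Preorder.topology _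

instance : OrderTopology (OrderCompactification α) := ⟨rfl⟩

instance : CompactSpace (OrderCompactification α) :=
  ⟨by rw [← Icc_bot_top]; exact isCompact_Icc⟩

theorem Ici_mem_nhds_of_forall_lt_le {x : OrderCompactification α} {z : LowerSet α ×ₗ Bool}
    (hz : z < x.1) (h : ∀ y, y < x → y.1 ≤ z) : Ici x ∈ 𝓝 x :=
  Ici_mem_nhds_of_sSup_Iio_lt fun hne =>
    show (sSup (Iio x)).1 < x.1 by
      rw [val_sSup hne]
      exact (sSup_le (forall_mem_image.2 h)).trans_lt hz

theorem Iic_mem_nhds_of_forall_gt_ge {x : OrderCompactification α} {z : LowerSet α ×ₗ Bool}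
    (hz : x.1 < z) (h : ∀ y, x < y → z ≤ y.1) : Iic x ∈ 𝓝 x :=
  Iic_mem_nhds_of_lt_sInf_Ioi fun hne =>
    show x.1 < (sInf (Ioi x)).1 by
      rw [val_sInf hne]
      exact hz.trans_le (le_sInf (forall_mem_image.2 h))

theorem Iic_mem_nhds_of_upper_eq_false {x : OrderCompactification α} (hx : x.upper = false) :
    Iic x ∈ 𝓝 x := by
  refine Iic_mem_nhds_of_forall_gt_ge (z := toLex (x.cut, true)) ?_ fun y hy => ?_
  · rw [val_eq, hx]
    exact Prod.Lex.toLex_lt_toLex.2 (Or.inr ⟨rfl, Bool.false_lt_true⟩)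
  · rw [val_eq, Prod.Lex.toLex_le_toLex]
    rcases lt_iff.1 hy with h | ⟨h, hup⟩
    · exact Or.inl h
    · exact Or.inr ⟨h, by simp [(Bool.lt_iff.1 (hx ▸ hup)).2]⟩

theorem Ici_mem_nhds_of_upper_eq_true {x : OrderCompactification α} (hx : x.upper = true) :
    Ici x ∈ 𝓝 x := by
  refine Ici_mem_nhds_of_forall_lt_le (z := toLex (x.cut, false)) ?_ fun y hy => ?_
  · rw [val_eq, hx]
    exact Prod.Lex.toLex_lt_toLex.2 (Or.inr ⟨rfl, Bool.false_lt_true⟩)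
  · rw [val_eq, Prod.Lex.toLex_le_toLex]
    rcases lt_iff.1 hy with h | ⟨h, hup⟩
    · exact Or.inl h
    · exact Or.inr ⟨h, by simp [(Bool.lt_iff.1 (hx ▸ hup)).1]⟩

theorem Ici_of_mem_nhds_of (a : α) : Ici (of a) ∈ 𝓝 (of a) := by
  refine Ici_mem_nhds_of_forall_lt_le (z := toLex (LowerSet.Iio a, false)) ?_ fun y hy => ?_
  · exact Prod.Lex.toLex_lt_toLex.2 (Or.inl (LowerSet.coe_ssubset_coe.1 Iio_ssubset_Iic_self))
  · have hcut := LowerSet.le_Iio_of_notMem (lt_of_iff.1 hy)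
    rw [val_eq, Prod.Lex.toLex_le_toLex]
    rcases hcut.lt_or_eq with h | h
    · exact Or.inl h
    · refine Or.inr ⟨h, ?_⟩
      cases hy : y.upper
      · exact le_rfl
      · exact absurd h (cut_ne_Iio hy a)

theorem isOpen_singleton_of (a : α) : IsOpen ({of a} : Set (OrderCompactification α)) := by
  rw [isOpen_iff_mem_nhds]
  rintro _ rfl
  rw [← Icc_self, ← Ici_inter_Iic]
  exact inter_mem (Ici_of_mem_nhds_of a) (Iic_mem_nhds_of_upper_eq_false (upper_of a))

theorem Ici_of_mem_nhds {a : α} {x : OrderCompactification α} (h : of a ≤ x) :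
    Ici (of a) ∈ 𝓝 x :=
  h.lt_or_eq.elim Ici_mem_nhds fun h => h ▸ Ici_of_mem_nhds_of a

theorem isLUB_of_image_cut {x : OrderCompactification α} (hx : x.upper = false) :
    IsLUB (of '' (x.cut : Set α)) x := by
  refine ⟨forall_mem_image.2 fun a => of_le_iff.2, fun y hy => le_iff.2 ?_⟩
  have hcut : x.cut ≤ y.cut := fun a ha => of_le_iff.1 (hy (mem_image_of_mem of ha))
  exact hcut.lt_or_eq.imp_right fun h => ⟨h, hx ▸ Bool.false_le _⟩

theorem isGLB_of_image_compl_cut {x : OrderCompactification α} (hx : x.upper = true) :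
    IsGLB (of '' (x.cut : Set α)ᶜ) x := by
  refine ⟨forall_mem_image.2 fun a ha => (lt_of_iff.2 ha).le, fun y hy => le_iff.2 ?_⟩
  have hcut : y.cut ≤ x.cut := by
    intro b hb
    by_contra hbx
    obtain ⟨c, hcb, hcx⟩ := exists_of_ssubset (LowerSet.coe_ssubset_coe.2
      ((LowerSet.le_Iio_of_notMem hbx).lt_of_ne (cut_ne_Iio hx b)))
    exact (not_le.2 (LowerSet.mem_Iio_iff.1 hcb)) (cut_mono (hy (mem_image_of_mem of hcx)) hb)
  exact hcut.lt_or_eq.imp_right fun h => ⟨h, hx ▸ Bool.le_true _⟩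

theorem dense_range_of : Dense (range (of : α → OrderCompactification α)) := by
  intro x
  cases hx : x.upper
  · exact closure_mono (image_subset_range _ _)
      ((isLUB_of_image_cut hx).mem_closure ((nonempty_cut hx).image of))
  · exact closure_mono (image_subset_range _ _) ((isGLB_of_image_compl_cut hx).mem_closure
      ((nonempty_compl_cut hx).image of))

theorem discreteTopology_range_of :
    DiscreteTopology (range (of : α → OrderCompactification α)) :=
  discreteTopology_subtype_iff'.2 fun _ ⟨a, ha⟩ => ⟨{of a}, isOpen_singleton_of a,
    ha ▸ singleton_inter_of_mem (mem_range_self a)⟩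

end Complete

section Congr

variable {α β : Type*} [LinearOrder α] [LinearOrder β]

theorem isPoint_map (f : α ≃o β) {U : LowerSet α} {b : Bool} (h : IsPoint U b) :
    IsPoint (LowerSet.map f U) b := by
  cases b
  · exact fun hU => h ((LowerSet.map f).injective (hU.trans (LowerSet.map f).map_bot.symm))
  · refine ⟨fun hU => h.1 ((LowerSet.map f).injective (hU.trans (LowerSet.map f).map_top.symm)),
      fun a hU => h.2 (f.symm a) ((LowerSet.map f).injective ?_)⟩
    rw [hU, LowerSet.map_Iio, f.apply_symm_apply]

def map (f : α ≃o β) (x : OrderCompactification α) : OrderCompactification β :=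
  mk (LowerSet.map f x.cut) x.upper (isPoint_map f x.isPoint)

@[simp] theorem cut_map (f : α ≃o β) (x : OrderCompactification α) :
    (map f x).cut = LowerSet.map f x.cut := rfl

@[simp] theorem upper_map (f : α ≃o β) (x : OrderCompactification α) :
    (map f x).upper = x.upper := rfl

theorem map_of (f : α ≃o β) (a : α) : map f (of a) = of (f a) :=
  ext (LowerSet.map_Iic f a) rfl

variable [Nonempty α] [Nonempty β]

def congr (f : α ≃o β) : OrderCompactification α ≃o OrderCompactification β where
  toFun := map f
  invFun := map f.symm
  left_inv x := ext (by simp) rfl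
  right_inv x := ext (by simp) rfl
  map_rel_iff' := by
    intro x y
    simp only [Equiv.coe_fn_mk, le_iff, cut_map, upper_map, (LowerSet.map f).lt_iff_lt,
      (LowerSet.map f).injective.eq_iff]

end Congr

section Group

variable {G : Type*} [Group G] [LinearOrder G] [MulLeftMono G]

def act (g : G) : OrderCompactification G ≃o OrderCompactification G :=
  congr (OrderIso.mulLeft g)

theorem coe_cut_act (g : G) (x : OrderCompactification G) :
    ((act g x).cut : Set G) = (g * ·) '' x.cut := rfl

theorem act_of (g a : G) : act g (of a) = of (g * a) := map_of _ a

theorem act_mul (g h : G) (x : OrderCompactification G) : act (g * h) x = act g (act h x) :=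
  ext (SetLike.coe_injective (by simp only [coe_cut_act, image_image, mul_assoc])) rfl

noncomputable def mul (x y : OrderCompactification G) : OrderCompactification G :=
  if x.upper then sInf ((act · y) '' (x.cut : Set G)ᶜ) else sSup ((act · y) '' x.cut)

theorem mul_of_upper_eq_false {x : OrderCompactification G} (hx : x.upper = false)
    (y : OrderCompactification G) : mul x y = sSup ((act · y) '' x.cut) := by
  simp [mul, hx]

theorem mul_of_upper_eq_true {x : OrderCompactification G} (hx : x.upper = true)
    (y : OrderCompactification G) : mul x y = sInf ((act · y) '' (x.cut : Set G)ᶜ) := by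
  simp [mul, hx]

theorem mul_act (g : G) (x y : OrderCompactification G) : mul (act g x) y = act g (mul x y) := by
  cases hx : x.upper
  · rw [mul_of_upper_eq_false (x := act g x) hx, mul_of_upper_eq_false hx,
      (act g).map_csSup' ((nonempty_cut hx).image _) (OrderTop.bddAbove _), coe_cut_act,
      image_image, image_image]
    simp only [act_mul]
  · rw [mul_of_upper_eq_true (x := act g x) hx, mul_of_upper_eq_true hx,
      (act g).map_csInf' ((nonempty_compl_cut hx).image _) (OrderBot.bddBelow _), coe_cut_act,
      ← image_compl_eq (Group.mulLeft_bijective g), image_image, image_image]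
    simp only [act_mul]

variable [MulRightMono G]

theorem act_le_act {g h : G} (hgh : g ≤ h) (x : OrderCompactification G) :
    act g x ≤ act h x := by
  refine le_of_cut_le (fun b hb => ?_) rfl
  obtain ⟨a, ha, rfl⟩ := (coe_cut_act g x ▸ hb : b ∈ (g * ·) '' x.cut)
  refine (coe_cut_act h x).symm ▸ ⟨h⁻¹ * g * a, x.cut.lower ?_ ha, by simp [mul_assoc]⟩
  simpa using mul_le_mul_left (mul_le_mul_right hgh h⁻¹) a

theorem act_le_mul {a : G} {x : OrderCompactification G} (ha : a ∈ x.cut)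
    (y : OrderCompactification G) : act a y ≤ mul x y := by
  cases hx : x.upper
  · rw [mul_of_upper_eq_false hx]
    exact le_csSup (OrderTop.bddAbove _) (mem_image_of_mem _ ha)
  · rw [mul_of_upper_eq_true hx]
    refine le_csInf ((nonempty_compl_cut hx).image _) (forall_mem_image.2 fun b hb => ?_)
    exact act_le_act (LowerSet.le_Iio_of_notMem hb ha : a < b).le y

theorem mul_le_act {a : G} {x : OrderCompactification G} (ha : a ∉ x.cut)
    (y : OrderCompactification G) : mul x y ≤ act a y := by
  cases hx : x.upper
  · rw [mul_of_upper_eq_false hx]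
    refine csSup_le ((nonempty_cut hx).image _) (forall_mem_image.2 fun b hb => ?_)
    exact act_le_act (LowerSet.le_Iio_of_notMem ha hb : b < a).le y
  · rw [mul_of_upper_eq_true hx]
    exact csInf_le (OrderBot.bddBelow _) (mem_image_of_mem _ ha)

theorem of_mul (a : G) (y : OrderCompactification G) : mul (of a) y = act a y :=
  le_antisymm (csSup_le ((nonempty_cut (upper_of a)).image _)
      (forall_mem_image.2 fun _ hb => act_le_act hb y))
    (act_le_mul (LowerSet.mem_Iic_iff.2 le_rfl) y)

theorem mul_mono_left (y : OrderCompactification G) : Monotone (mul · y) := by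
  intro x x' hxx'
  by_cases hcut : x.cut = x'.cut
  · by_cases hupper : x.upper = x'.upper
    · rw [ext hcut hupper]
    have hx : x.upper = false ∧ x'.upper = true := Bool.lt_iff.1
      (((le_iff.1 hxx').resolve_left hcut.not_lt).2.lt_of_ne hupper)
    show mul x y ≤ mul x' y
    rw [mul_of_upper_eq_true hx.2]
    exact le_csInf ((nonempty_compl_cut hx.2).image _)
      (forall_mem_image.2 fun a ha => mul_le_act (hcut ▸ ha) y)
  · obtain ⟨a, ha', ha⟩ := exists_of_ssubset
      (LowerSet.coe_ssubset_coe.2 ((cut_mono hxx').lt_of_ne hcut))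
    exact (mul_le_act ha y).trans (act_le_mul ha' y)

theorem mul_mono_right (x : OrderCompactification G) : Monotone (mul x) := by
  intro y y' hyy'
  cases hx : x.upper
  · rw [mul_of_upper_eq_false hx y]
    exact csSup_le ((nonempty_cut hx).image _)
      (forall_mem_image.2 fun a ha => ((act a).monotone hyy').trans (act_le_mul ha y'))
  · rw [mul_of_upper_eq_true hx y']
    exact le_csInf ((nonempty_compl_cut hx).image _)
      (forall_mem_image.2 fun a ha => (mul_le_act ha y).trans ((act a).monotone hyy'))

theorem continuous_mul_right (y : OrderCompactification G) : Continuous (mul · y) := by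
  refine continuous_iff_continuousAt.2 fun x => tendsto_order.2 ⟨fun b hb => ?_, fun b hb => ?_⟩
  · change b < mul x y at hb
    cases hx : x.upper
    · rw [mul_of_upper_eq_false hx] at hb
      obtain ⟨_, ⟨a, ha, rfl⟩, hba⟩ := exists_lt_of_lt_csSup ((nonempty_cut hx).image _) hb
      filter_upwards [Ici_of_mem_nhds (of_le_iff.2 ha)] with x' hx'
      exact hba.trans_le ((of_mul a y).symm.trans_le (mul_mono_left y hx'))
    · filter_upwards [Ici_mem_nhds_of_upper_eq_true hx] with x' hx'
      exact hb.trans_le (mul_mono_left y hx')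
  · change mul x y < b at hb
    cases hx : x.upper
    · filter_upwards [Iic_mem_nhds_of_upper_eq_false hx] with x' hx'
      exact (mul_mono_left y hx').trans_lt hb
    · rw [mul_of_upper_eq_true hx] at hb
      obtain ⟨_, ⟨a, ha, rfl⟩, hab⟩ :=
        exists_lt_of_csInf_lt ((nonempty_compl_cut hx).image _) hb
      filter_upwards [isOpen_Iio.mem_nhds (lt_of_iff.2 ha)] with x' hx'
      exact ((mul_mono_left y hx'.le).trans_eq (of_mul a y)).trans_lt hab

theorem mul_assoc (x y z : OrderCompactification G) : mul (mul x y) z = mul x (mul y z) := by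
  have hof : EqOn (fun x => mul (mul x y) z) (fun x => mul x (mul y z)) (range of) := by
    rintro _ ⟨a, rfl⟩
    simp only [of_mul, mul_act]
  exact congrFun (Continuous.ext_on dense_range_of
    ((continuous_mul_right z).comp (continuous_mul_right y)) (continuous_mul_right _) hof) x

noncomputable instance : Semigroup (OrderCompactification G) where
  mul := mul
  mul_assoc := mul_assoc

theorem continuous_of_mul (g : G) : Continuous (mul (of g)) := by
  rw [funext (of_mul g)]
  exact (act g).continuous

end Group

end OrderCompactification

/-- A group `G` admits a bi-invariant linear order if and only if `G` admits
a proper linearly ordered right topological semigroup compactification of its discrete copy: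
a compact Hausdorff linearly ordered space `S` (with the order topology) carrying a semigroup
operation with continuous right translations and a bi-invariant order, together with an
injective semigroup homomorphism `γ : G → S` with dense image which is a discrete subspace of
`S`, all left translations by elements of `γ(G)` being continuous. -/
theorem biorderable_iff_ordered_semigroup_compactification
    {G : Type u} [Group G] :
    (∃ lo : LinearOrder G, ∀ g x y : G,
        lo.le x y → lo.le (g * x) (g * y) ∧ lo.le (x * g) (y * g)) ↔
      (∃ (S : Type u) (tS : TopologicalSpace S) (loS : LinearOrder S)
        (sg : Semigroup S) (γ : G → S),
        letI := tS
        letI := loS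
        letI := sg
        CompactSpace S ∧ T2Space S ∧ OrderTopology S ∧
        (∀ t : S, Continuous (fun s : S => s * t)) ∧
        (∀ s x y : S, x ≤ y → x * s ≤ y * s ∧ s * x ≤ s * y) ∧
        Function.Injective γ ∧
        (∀ a b : G, γ (a * b) = γ a * γ b) ∧
        Dense (Set.range γ) ∧
        DiscreteTopology (Set.range γ) ∧
        (∀ g : G, Continuous (fun s : S => γ g * s))) := by
  constructor
  · rintro ⟨lo, hbi⟩
    have : MulLeftMono G := ⟨fun g _ _ h => (hbi g _ _ h).1⟩
    have : MulRightMono G := ⟨fun g _ _ h => (hbi g _ _ h).2⟩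
    open OrderCompactification in
    exact ⟨OrderCompactification G, inferInstance, inferInstance, inferInstance, of,
      inferInstance, inferInstance, inferInstance, continuous_mul_right,
      fun s _ _ h => ⟨mul_mono_left s h, mul_mono_right s h⟩, of_injective,
      fun a b => ((of_mul a (of b)).trans (act_of a b)).symm, dense_range_of,
      discreteTopology_range_of, continuous_of_mul⟩
  · rintro ⟨S, -, loS, sg, γ, -, -, -, -, hmono, hinj, hhom, -⟩
    refine ⟨LinearOrder.lift' γ hinj, fun g x y (hxy : γ x ≤ γ y) => ⟨?_, ?_⟩⟩
    · show γ (g * x) ≤ γ (g * y)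
      rw [hhom, hhom]
      exact (hmono (γ g) _ _ hxy).2
    · show γ (x * g) ≤ γ (y * g)
      rw [hhom, hhom]
      exact (hmono (γ g) _ _ hxy).1
end
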